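/- arXiv:2012.00870 — 12 statements merged into one kernel-verified Lean document; each statement's English description precedes it below -/
import Mathlib

section
/- Let f : F_q → F_q be differentially d-uniform. Then N(f) ≤ q + d·t₀(f), where t₀(f) is the number of nonzero a ∈ F_q for which f(x+a) − f(x) = 0 has a solution. Equality holds if and only if each of these t₀(f) equations has exactly d solutions. -/
open Finset
open scoped Classical

/-- Number of preimages of `y` under `f`. -/
noncomputable def preCard {F : Type*} [Fintype F] (f : F → F) (y : F) : ℕ :=
  (Finset.univ.filter fun x => f x = y).card

/-- `N(f)`: the number of pairs `(x,y)` with `f x = f y`. -/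
noncomputable def NN {F : Type*} [Fintype F] (f : F → F) : ℕ :=
  (Finset.univ.filter fun p : F × F => f p.1 = f p.2).card

/-- `f` is differentially `d`-uniform: every equation `f (x+a) - f x = b` with `a ≠ 0`
has at most `d` solutions. -/
def DUniform {F : Type*} [Field F] [Fintype F] (f : F → F) (d : ℕ) : Prop :=
  ∀ a b : F, a ≠ 0 → (Finset.univ.filter fun x => f (x + a) - f x = b).card ≤ d

/-- `M_r(f)`: the number of elements with exactly `r` preimages under `f`. -/
noncomputable def Mcount {F : Type*} [Fintype F] (f : F → F) (r : ℕ) : ℕ :=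
  (Finset.univ.filter fun y => preCard f y = r).card

/-
Sorting the pairs `(x, y)` with `f x = f y` by their difference `a = y - x` gives
`N(f) = ∑ₐ #{x | f (x + a) = f x}`. The term `a = 0` contributes `q`, the terms with no solution
vanish, and each of the remaining `t₀(f)` terms is at most `d` by differential uniformity.
-/

theorem Finset.sum_le_mul_card_and_eq_iff {ι : Type*} {s : Finset ι} {c : ι → ℕ} {d : ℕ}
    (h : ∀ i ∈ s, c i ≤ d) :
    ∑ i ∈ s, c i ≤ d * #s ∧ (∑ i ∈ s, c i = d * #s ↔ ∀ i ∈ s, c i = d) := by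
  have hconst : ∑ _i ∈ s, d = d * #s := by rw [sum_const, smul_eq_mul, mul_comm]
  rw [← hconst]
  exact ⟨sum_le_sum h, sum_eq_sum_iff_of_le h⟩

section AddGroup

variable {F : Type*} [AddGroup F] [Fintype F]

theorem NN_eq_sum_card_shift_eq (f : F → F) :
    NN f = ∑ a, #{x | f (x + a) = f x} := by
  let shear : F × F ≃ F × F := Equiv.prodShear (Equiv.refl F) Equiv.addLeft
  rw [NN, card_filter, ← shear.sum_comp, Fintype.sum_prod_type, sum_comm]
  refine sum_congr rfl fun a _ => ?_
  rw [card_filter]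
  refine sum_congr rfl fun x _ => ?_
  simp [shear, eq_comm]

theorem NN_eq_card_add_sum_card_shift_eq (f : F → F) :
    NN f = Fintype.card F +
      ∑ a ∈ {a | a ≠ 0 ∧ ∃ x, f (x + a) = f x}, #{x | f (x + a) = f x} := by
  rw [NN_eq_sum_card_shift_eq, Fintype.sum_eq_add_sum_compl 0]
  congr 1
  · simp
  · symm
    refine sum_subset (fun a ha => ?_) fun a ha hna => ?_
    · simpa using (mem_filter.1 ha).2.1
    · have ha0 : a ≠ 0 := by simpa using ha
      simpa [ha0] using hna

end AddGroup

/-- `N(f) ≤ q + d·t₀(f)`, with equality iff each of the `t₀(f)` equations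
`f(x+a) - f(x) = 0` (with `a ≠ 0` admitting a solution) has exactly `d` solutions. -/
theorem N_le_card_add_d_mul_t0 {F : Type*} [Field F] [Fintype F] {f : F → F} {d : ℕ}
    (hf : DUniform f d) :
    NN f ≤ Fintype.card F +
      d * (Finset.univ.filter fun a : F => a ≠ 0 ∧ ∃ x, f (x + a) - f x = 0).card ∧
    (NN f = Fintype.card F +
        d * (Finset.univ.filter fun a : F => a ≠ 0 ∧ ∃ x, f (x + a) - f x = 0).card ↔
      ∀ a : F, a ≠ 0 → (∃ x, f (x + a) - f x = 0) →
        (Finset.univ.filter fun x => f (x + a) - f x = 0).card = d) := by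
  have hle : ∀ a ∈ ({a | a ≠ 0 ∧ ∃ x, f (x + a) = f x} : Finset F),
      #{x | f (x + a) = f x} ≤ d := fun a ha => by
    simpa only [sub_eq_zero] using hf a 0 (mem_filter.1 ha).2.1
  obtain ⟨hsum_le, hsum_eq⟩ := Finset.sum_le_mul_card_and_eq_iff hle
  simp only [sub_eq_zero, NN_eq_card_add_sum_card_shift_eq, add_le_add_iff_left, add_right_inj]
  refine ⟨hsum_le, hsum_eq.trans ?_⟩
  simp
end

section
/- Let f : F_q → F_q be differentially d-uniform. Then N(f) ≤ (d+1)q − d, with equality if and only if f is zero-difference d-balanced (i.e., f(x+a) − f(x) = 0 has exactly d solutions for every nonzero a). -/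
open Finset
open scoped Classical

/-- `N(f) ≤ (d+1)q − d`, with equality iff `f` is zero-difference
`d`-balanced. -/
theorem N_le_and_zero_difference_balanced {F : Type*} [Field F] [Fintype F] {f : F → F} {d : ℕ}
    (hf : DUniform f d) :
    NN f ≤ (d + 1) * Fintype.card F - d ∧
    (NN f = (d + 1) * Fintype.card F - d ↔
      ∀ a : F, a ≠ 0 → (Finset.univ.filter fun x => f (x + a) - f x = 0).card = d) := by
  classical
  have key : NN f =
      ∑ a : F, (Finset.univ.filter fun x => f (x + a) - f x = 0).card := by
    rw [NN, Finset.card_filter, Fintype.sum_prod_type]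
    have h1 : ∀ x : F, (∑ y : F, if f x = f y then 1 else 0) =
        ∑ a : F, if f (x + a) - f x = 0 then (1:ℕ) else 0 := by
      intro x
      rw [← Equiv.sum_comp (Equiv.addLeft x) (fun y => if f x = f y then (1:ℕ) else 0)]
      apply Finset.sum_congr rfl
      intro a _
      simp [Equiv.addLeft, sub_eq_zero, eq_comm, add_comm]
    simp_rw [h1]
    rw [Finset.sum_comm]
    exact Finset.sum_congr rfl fun a _ => (Finset.card_filter _ _).symm
  set c : F → ℕ := fun a => (Finset.univ.filter fun x => f (x + a) - f x = 0).card with hc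
  have hc0 : c 0 = Fintype.card F := by
    simp [hc, Finset.filter_true_of_mem]
  have hsplit : NN f = Fintype.card F + ∑ a ∈ Finset.univ.erase (0 : F), c a := by
    rw [key, ← Finset.add_sum_erase _ c (Finset.mem_univ (0 : F)), hc0]
  have hle : ∀ a ∈ Finset.univ.erase (0 : F), c a ≤ d := by
    intro a ha
    exact hf a 0 (Finset.ne_of_mem_erase ha)
  have hcarderase : (Finset.univ.erase (0 : F)).card = Fintype.card F - 1 := by
    rw [Finset.card_erase_of_mem (Finset.mem_univ _), Finset.card_univ]
  have hsum_le : ∑ a ∈ Finset.univ.erase (0 : F), c a ≤ (Fintype.card F - 1) * d := by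
    calc ∑ a ∈ Finset.univ.erase (0 : F), c a ≤ ∑ _a ∈ Finset.univ.erase (0 : F), d :=
          Finset.sum_le_sum hle
      _ = (Fintype.card F - 1) * d := by rw [Finset.sum_const, smul_eq_mul, hcarderase]
  have hq : 1 ≤ Fintype.card F := Fintype.card_pos
  have harith : (d + 1) * Fintype.card F - d = Fintype.card F + (Fintype.card F - 1) * d := by
    obtain ⟨n, hn⟩ : ∃ n, Fintype.card F = n + 1 := ⟨Fintype.card F - 1, by omega⟩
    rw [hn]
    have : (d + 1) * (n + 1) = (n + 1 + (n + 1 - 1) * d) + d := by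
      simp; ring
    omega
  constructor
  · rw [hsplit, harith]
    omega
  · rw [hsplit, harith]
    have hiff : ∑ a ∈ Finset.univ.erase (0 : F), c a = (Fintype.card F - 1) * d ↔
        ∀ a ∈ Finset.univ.erase (0 : F), c a = d := by
      constructor
      · intro h
        have := (Finset.sum_eq_sum_iff_of_le hle).mp (by
          rw [h, Finset.sum_const, smul_eq_mul, hcarderase])
        exact this
      · intro h
        rw [Finset.sum_congr rfl h, Finset.sum_const, smul_eq_mul, hcarderase]
    constructor
    · intro h
      have : ∑ a ∈ Finset.univ.erase (0 : F), c a = (Fintype.card F - 1) * d := by omega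
      intro a ha
      exact hiff.mp this a (Finset.mem_erase.mpr ⟨ha, Finset.mem_univ a⟩)
    · intro h
      have : ∑ a ∈ Finset.univ.erase (0 : F), c a = (Fintype.card F - 1) * d :=
        hiff.mpr fun a ha => h a (Finset.ne_of_mem_erase ha)
      omega
end

section
/- Let f : F_q → F_q be differentially d-uniform. Then |Image(f)| ≥ ⌈q/(d+1)⌉. -/
open Finset
open scoped Classical

section Aux
variable {F : Type*} [Field F] [Fintype F]

lemma sum_preCard (f : F → F) :
    ∑ y ∈ Finset.image f Finset.univ, preCard f y = Fintype.card F := by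
  rw [← Finset.card_univ]
  exact (Finset.card_eq_sum_card_fiberwise (fun x _ => Finset.mem_image_of_mem f (Finset.mem_univ x))).symm

lemma NN_eq_sum_sq (f : F → F) :
    NN f = ∑ y ∈ Finset.image f Finset.univ, (preCard f y) ^ 2 := by
  unfold NN
  rw [Finset.card_eq_sum_card_fiberwise
    (f := fun p : F × F => f p.1)
    (t := Finset.image f Finset.univ)
    (fun p _ => Finset.mem_image_of_mem f (Finset.mem_univ p.1))]
  refine Finset.sum_congr rfl fun y _ => ?_
  have : (Finset.univ.filter fun p : F × F => f p.1 = f p.2).filter (fun p => f p.1 = y)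
      = (Finset.univ.filter fun x => f x = y) ×ˢ (Finset.univ.filter fun x => f x = y) := by
    ext p
    simp only [Finset.mem_filter, Finset.mem_univ, true_and, Finset.mem_product]
    constructor
    · rintro ⟨h1, h2⟩; exact ⟨h2, h1 ▸ h2⟩
    · rintro ⟨h1, h2⟩; exact ⟨h1.trans h2.symm, h1⟩
  rw [this, Finset.card_product, preCard, sq]

lemma NN_eq_sum_a (f : F → F) :
    NN f = ∑ a : F, (Finset.univ.filter fun x => f (x + a) = f x).card := by
  unfold NN
  rw [Finset.card_eq_sum_card_fiberwise
    (f := fun p : F × F => p.2 - p.1) (t := Finset.univ) (fun p _ => Finset.mem_univ _)]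
  refine Finset.sum_congr rfl fun a _ => ?_
  refine Finset.card_bij' (fun p _ => p.1) (fun x _ => (x, x + a)) ?_ ?_ ?_ ?_
  · intro p hp
    simp only [Finset.mem_filter, Finset.mem_univ, true_and] at hp ⊢
    obtain ⟨h1, h2⟩ := hp
    have : p.2 = p.1 + a := by linear_combination h2
    rw [← this]; exact h1.symm
  · intro x hx
    simp only [Finset.mem_filter, Finset.mem_univ, true_and] at hx ⊢
    constructor
    · exact hx.symm
    · ring
  · intro p hp
    simp only [Finset.mem_filter, Finset.mem_univ, true_and] at hp
    have : p.2 = p.1 + a := by linear_combination hp.2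
    exact Prod.ext rfl this.symm
  · intro x hx; rfl

lemma NN_le (f : F → F) {d : ℕ} (hf : DUniform f d) :
    NN f ≤ Fintype.card F * (d + 1) := by
  rw [NN_eq_sum_a]
  have h0 : (0 : F) ∈ (Finset.univ : Finset F) := Finset.mem_univ _
  rw [← Finset.sum_erase_add _ _ h0]
  have h1 : ∑ a ∈ Finset.univ.erase (0 : F),
      (Finset.univ.filter fun x => f (x + a) = f x).card ≤ Fintype.card F * d := by
    calc ∑ a ∈ Finset.univ.erase (0 : F),
        (Finset.univ.filter fun x => f (x + a) = f x).card
        ≤ ∑ _a ∈ Finset.univ.erase (0 : F), d := by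
          refine Finset.sum_le_sum fun a ha => ?_
          have ha0 : a ≠ 0 := Finset.ne_of_mem_erase ha
          have := hf a 0 ha0
          refine le_trans (le_of_eq ?_) this
          congr 1
          refine Finset.filter_congr fun x _ => ?_
          constructor
          · intro h; rw [h, sub_self]
          · intro h; exact sub_eq_zero.mp h
      _ ≤ Fintype.card F * d := by
          rw [Finset.sum_const, smul_eq_mul]
          exact Nat.mul_le_mul_right d (le_trans (Finset.card_le_card (Finset.erase_subset _ _)) (by simp))
  have h2 : (Finset.univ.filter fun x => f (x + 0) = f x).card ≤ Fintype.card F := by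
    exact le_trans (Finset.card_filter_le _ _) (le_of_eq (Finset.card_univ))
  calc _ ≤ Fintype.card F * d + Fintype.card F := Nat.add_le_add h1 h2
    _ = Fintype.card F * (d + 1) := by ring

end Aux

/-- a differentially `d`-uniform map satisfies `|Image f| ≥ ⌈q/(d+1)⌉`. -/
theorem image_ge_ceil {F : Type*} [Field F] [Fintype F] {f : F → F} {d : ℕ}
    (hf : DUniform f d) :
    ⌈(Fintype.card F : ℚ) / (d + 1)⌉₊ ≤ (Finset.image f Finset.univ).card := by
  set T := Finset.image f Finset.univ with hT
  set q := Fintype.card F with hq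
  have hq0 : 0 < q := Fintype.card_pos
  -- Cauchy-Schwarz over ℚ
  have cs : ((q : ℚ)) ^ 2 ≤ (T.card : ℚ) * ∑ y ∈ T, ((preCard f y : ℚ)) ^ 2 := by
    have := sq_sum_le_card_mul_sum_sq (s := T) (f := fun y => (preCard f y : ℚ))
    have hsum : ∑ y ∈ T, (preCard f y : ℚ) = (q : ℚ) := by
      rw [← Nat.cast_sum]; exact_mod_cast congrArg (Nat.cast (R := ℚ)) (sum_preCard f)
    rwa [hsum] at this
  have hNN : (∑ y ∈ T, (preCard f y) ^ 2 : ℕ) ≤ q * (d + 1) := by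
    rw [← NN_eq_sum_sq]; exact NN_le f hf
  have key : ((q : ℚ)) ^ 2 ≤ (T.card : ℚ) * (q * (d + 1)) := by
    refine le_trans cs ?_
    have : (∑ y ∈ T, ((preCard f y : ℚ)) ^ 2) ≤ ((q : ℚ) * (d + 1)) := by
      have := hNN
      push_cast
      exact_mod_cast this
    exact mul_le_mul_of_nonneg_left this (by positivity)
  have hmain : (q : ℚ) / (d + 1) ≤ (T.card : ℚ) := by
    rw [div_le_iff₀ (by positivity)]
    have hq0' : (0 : ℚ) < q := by exact_mod_cast hq0
    have := key
    rw [sq] at this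
    nlinarith
  exact Nat.ceil_le.mpr hmain
end

section
/- Let d+1 divide q−1 and f : F_q → F_q be (d+1)-divisible (i.e., f(x) = f'(x^{d+1}) for some f') and differentially d-uniform. Then f is almost-(d+1)-to-1, i.e., exactly one element of Image(f) has exactly 1 preimage and all others have exactly d+1 preimages. -/
open Finset
open scoped Classical

theorem aux_roots_card {F : Type*} [Field F] [Fintype F] {d : ℕ}
    (hdvd : (d + 1) ∣ (Fintype.card F - 1)) :
    (univ.filter fun z : F => z ^ (d+1) = 1).card = d + 1 := by
  obtain ⟨g, hg⟩ := IsCyclic.exists_ofOrder_eq_natCard (α := Fˣ)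
  rw [Nat.card_eq_fintype_card, Fintype.card_units] at hg
  obtain ⟨k, hk⟩ := hdvd
  have h2 : 2 ≤ Fintype.card F := Fintype.one_lt_card
  have hk0 : 0 < k := by
    rcases Nat.eq_zero_or_pos k with h | h
    · subst h; simp at hk; omega
    · exact h
  have hord : orderOf (g ^ k) = d + 1 := by
    rw [orderOf_pow, hg, hk, Nat.gcd_eq_right ⟨d+1, by ring⟩, Nat.mul_div_cancel _ hk0]
  have hprim : IsPrimitiveRoot ((g ^ k : Fˣ) : F) (d+1) := by
    rw [IsPrimitiveRoot.coe_units_iff]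
    exact hord ▸ IsPrimitiveRoot.orderOf (g ^ k)
  have hset : (univ.filter fun z : F => z ^ (d+1) = 1) = Polynomial.nthRootsFinset (d+1) (1 : F) := by
    ext z
    simp [Polynomial.mem_nthRootsFinset (Nat.succ_pos d)]
  rw [hset, hprim.card_nthRootsFinset]

theorem aux_fiber_dvd {F : Type*} [Field F] [Fintype F] {d : ℕ}
    (hdvd : (d + 1) ∣ (Fintype.card F - 1)) (S : Finset F) (h0 : (0:F) ∉ S)
    (hS : ∀ x ∈ S, ∀ z : F, z ^ (d+1) = 1 → z * x ∈ S) :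
    (d + 1) ∣ S.card := by
  have hroots := aux_roots_card hdvd
  rw [Finset.card_eq_sum_card_fiberwise (f := fun x : F => x ^ (d+1))
    (t := S.image (fun x => x ^ (d+1))) (fun x hx => Finset.mem_image_of_mem _ hx)]
  apply Finset.dvd_sum
  intro t ht
  obtain ⟨x, hxS, hxt⟩ := Finset.mem_image.mp ht
  have hx0 : x ≠ 0 := fun h => h0 (h ▸ hxS)
  have : S.filter (fun z => z ^ (d+1) = t) = (univ.filter fun z : F => z ^ (d+1) = 1).image (· * x) := by
    ext z
    simp only [Finset.mem_filter, Finset.mem_image, Finset.mem_univ, true_and]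
    constructor
    · rintro ⟨hzS, hzt⟩
      refine ⟨z * x⁻¹, ?_, by field_simp⟩
      rw [mul_pow, hzt, inv_pow, ← hxt]
      field_simp
    · rintro ⟨ζ, hζ, rfl⟩
      exact ⟨hS x hxS ζ hζ, by rw [mul_pow, hζ, one_mul, hxt]⟩
  rw [this, Finset.card_image_of_injective _ (fun a b h => mul_right_cancel₀ hx0 h), hroots]

theorem aux_sumA {F : Type*} [Fintype F] (f : F → F) :
    ∑ y ∈ univ.image f, preCard f y = Fintype.card F := by
  rw [← Finset.card_univ,
    Finset.card_eq_sum_card_fiberwise (f := f) (t := univ.image f)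
      (fun x _ => Finset.mem_image_of_mem _ (mem_univ x))]
  rfl

theorem aux_sumB {F : Type*} [Fintype F] (f : F → F) :
    NN f = ∑ y ∈ univ.image f, (preCard f y) ^ 2 := by
  rw [NN, Finset.card_eq_sum_card_fiberwise (f := fun p : F × F => f p.1)
      (t := univ.image f) (fun p hp => Finset.mem_image_of_mem _ (mem_univ p.1))]
  refine Finset.sum_congr rfl fun y _ => ?_
  have : ((univ.filter fun p : F × F => f p.1 = f p.2).filter fun p => f p.1 = y)
      = (univ.filter fun x => f x = y) ×ˢ (univ.filter fun x => f x = y) := by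
    ext p
    simp only [mem_filter, mem_univ, true_and, Finset.mem_product]
    constructor
    · rintro ⟨h1, h2⟩; exact ⟨h2, h1 ▸ h2⟩
    · rintro ⟨h1, h2⟩; exact ⟨h1.trans h2.symm, h1⟩
  rw [this, Finset.card_product, preCard, sq]

theorem aux_sumC {F : Type*} [Field F] [Fintype F] {f : F → F} {d : ℕ} (hf : DUniform f d) :
    NN f ≤ Fintype.card F + (Fintype.card F - 1) * d := by
  rw [NN, Finset.card_eq_sum_card_fiberwise (f := fun p : F × F => p.2 - p.1)
      (t := univ) (fun p _ => mem_univ _)]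
  have key : ∀ a : F, ((univ.filter fun p : F × F => f p.1 = f p.2).filter fun p => p.2 - p.1 = a).card
      = (univ.filter fun x => f (x + a) - f x = 0).card := by
    intro a
    apply Finset.card_nbij' (i := fun p => p.1) (j := fun x => (x, x + a))
    · rintro ⟨x, z⟩ hp
      simp only [Finset.mem_coe, mem_filter, mem_univ, true_and] at hp ⊢
      obtain ⟨h1, h2⟩ := hp
      have : z = x + a := by rw [← h2]; ring
      rw [this] at h1
      rw [← h1, sub_self]
    · intro x hx
      simp only [Finset.mem_coe, mem_filter, mem_univ, true_and] at hx ⊢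
      exact ⟨(sub_eq_zero.mp hx).symm, by ring⟩
    · rintro ⟨x, z⟩ hp
      simp only [Finset.mem_coe, mem_filter, mem_univ, true_and] at hp
      obtain ⟨h1, h2⟩ := hp
      have : z = x + a := by rw [← h2]; ring
      simp [this]
    · intro x hx; rfl
  calc ∑ a : F, ((univ.filter fun p : F × F => f p.1 = f p.2).filter fun p => p.2 - p.1 = a).card
      = ∑ a : F, (univ.filter fun x => f (x + a) - f x = 0).card := by
        exact Finset.sum_congr rfl fun a _ => key a
    _ = (univ.filter fun x : F => f (x + 0) - f x = 0).card
        + ∑ a ∈ univ.erase 0, (univ.filter fun x => f (x + a) - f x = 0).card := by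
        rw [← Finset.add_sum_erase _ _ (mem_univ (0:F))]
    _ ≤ Fintype.card F + (Fintype.card F - 1) * d := by
        gcongr
        · simp
        · calc ∑ a ∈ univ.erase 0, (univ.filter fun x => f (x + a) - f x = 0).card
              ≤ ∑ a ∈ univ.erase 0, d :=
                Finset.sum_le_sum fun a ha => hf a 0 (Finset.ne_of_mem_erase ha)
            _ = (Fintype.card F - 1) * d := by
                rw [Finset.sum_const, smul_eq_mul, Finset.card_erase_of_mem (mem_univ _),
                  Finset.card_univ]

/-- if `d+1 ∣ q−1` and `f` is `(d+1)`-divisible and differentially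
`d`-uniform, then `f` is almost-`(d+1)`-to-1. -/
theorem divisible_dUniform_almost_to_one {F : Type*} [Field F] [Fintype F] {f : F → F} {d : ℕ}
    (hdvd : (d + 1) ∣ (Fintype.card F - 1))
    (hdiv : ∃ f' : F → F, ∀ x, f x = f' (x ^ (d + 1)))
    (hf : DUniform f d) :
    ∃ y₀ ∈ Finset.image f Finset.univ, preCard f y₀ = 1 ∧
      ∀ y ∈ Finset.image f Finset.univ, y ≠ y₀ → preCard f y = d + 1 := by
  obtain ⟨f', hf'⟩ := hdiv
  set T := Finset.image f Finset.univ with hT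
  set y₀ := f 0 with hy₀
  have hy₀T : y₀ ∈ T := Finset.mem_image_of_mem f (mem_univ 0)
  have hinv : ∀ (y x : F), f x = y → ∀ z : F, z ^ (d+1) = 1 → f (z * x) = y := by
    intro y x hx z hz
    rw [hf', mul_pow, hz, one_mul, ← hf', hx]
  have hz0 : ∀ z : F, z ^ (d+1) = 1 → z ≠ 0 := by
    intro z hz h
    rw [h, zero_pow (Nat.succ_ne_zero d)] at hz
    exact zero_ne_one hz
  -- divisibility for y ≠ y₀
  have hdvd1 : ∀ y ∈ T, y ≠ y₀ → (d+1) ∣ preCard f y := by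
    intro y _ hne
    apply aux_fiber_dvd hdvd
    · intro h0
      rw [Finset.mem_filter] at h0
      exact hne (hy₀ ▸ h0.2.symm)
    · intro x hx z hz
      rw [Finset.mem_filter] at hx ⊢
      exact ⟨mem_univ _, hinv y x hx.2 z hz⟩
  have hge : ∀ y ∈ T, y ≠ y₀ → d + 1 ≤ preCard f y := by
    intro y hy hne
    obtain ⟨x, -, hx⟩ := Finset.mem_image.mp hy
    have hpos : 0 < preCard f y :=
      Finset.card_pos.mpr ⟨x, Finset.mem_filter.mpr ⟨mem_univ _, hx⟩⟩
    exact Nat.le_of_dvd hpos (hdvd1 y hy hne)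
  -- fiber of y₀
  have h0mem : (0:F) ∈ univ.filter (fun x => f x = y₀) := by
    simp [hy₀]
  have hcard0 : preCard f y₀ = ((univ.filter fun x : F => f x = y₀).erase 0).card + 1 := by
    rw [preCard, ← Finset.card_erase_add_one h0mem]
  have hdvd0 : (d+1) ∣ ((univ.filter fun x : F => f x = y₀).erase 0).card := by
    apply aux_fiber_dvd hdvd
    · exact fun h => (Finset.mem_erase.mp h).1 rfl
    · intro x hx z hz
      rw [Finset.mem_erase, Finset.mem_filter] at hx ⊢
      exact ⟨mul_ne_zero (hz0 z hz) hx.1, mem_univ _, hinv y₀ x hx.2.2 z hz⟩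
  obtain ⟨k₀, hk₀⟩ := hdvd0
  set q := Fintype.card F with hq
  have h2q : 2 ≤ q := Fintype.one_lt_card
  set s₀ := preCard f y₀ with hs₀def
  set R := ∑ y ∈ T.erase y₀, preCard f y with hR
  set Q := ∑ y ∈ T.erase y₀, (preCard f y)^2 with hQdef
  have hA : s₀ + R = q := by
    rw [hs₀def, hR, Finset.add_sum_erase _ _ hy₀T]
    exact aux_sumA f
  have hB : NN f = s₀^2 + Q := by
    rw [aux_sumB f, ← Finset.add_sum_erase _ _ hy₀T]
  have hC : NN f ≤ q + (q - 1) * d := aux_sumC hf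
  have hQge : (d+1) * R ≤ Q := by
    rw [hR, hQdef, Finset.mul_sum]
    apply Finset.sum_le_sum
    intro y hy
    have h1 := hge y (Finset.mem_of_mem_erase hy) (Finset.ne_of_mem_erase hy)
    calc (d+1) * preCard f y ≤ preCard f y * preCard f y :=
          Nat.mul_le_mul_right _ h1
      _ = (preCard f y)^2 := (sq _).symm
  have hs₀eq : s₀ = (d+1) * k₀ + 1 := by rw [hcard0, hk₀]
  have hqd : (q - 1) * d ≤ q * d := Nat.mul_le_mul_right d (Nat.sub_le q 1)
  -- k₀ = 0
  have hk00 : k₀ = 0 := by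
    by_contra h
    have hk1 : 1 ≤ k₀ := Nat.one_le_iff_ne_zero.mpr h
    have hs2 : d + 2 ≤ s₀ := by
      rw [hs₀eq]
      have : d + 1 ≤ (d+1) * k₀ := Nat.le_mul_of_pos_right _ hk1
      omega
    have e1 : (d+2) * s₀ ≤ s₀^2 := by
      rw [sq]; exact Nat.mul_le_mul_right _ hs2
    have e2 : (d+2) * s₀ + (d+1) * R ≤ q + q * d := by
      calc (d+2) * s₀ + (d+1) * R ≤ s₀^2 + Q := Nat.add_le_add e1 hQge
        _ = NN f := hB.symm
        _ ≤ q + (q-1) * d := hC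
        _ ≤ q + q * d := by omega
    have e3 : q + q * d = (d+1) * s₀ + (d+1) * R := by rw [← hA]; ring
    have e4 : (d+2) * s₀ ≤ (d+1) * s₀ := by omega
    have e5 : (d+1) * s₀ < (d+2) * s₀ := by
      apply Nat.mul_lt_mul_of_lt_of_le (by omega) le_rfl
      omega
    omega
  have hs1 : s₀ = 1 := by rw [hs₀eq, hk00]; ring
  -- equality forces all other fibers to have size exactly d+1
  have hRq : R = q - 1 := by omega
  have hm : q = (q - 1) + 1 := by omega
  have hQle : Q ≤ (d+1) * R := by
    have h1 : 1 + Q ≤ q + (q-1) * d := by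
      calc 1 + Q = s₀^2 + Q := by rw [hs1]; ring_nf
        _ = NN f := hB.symm
        _ ≤ q + (q-1) * d := hC
    have h2 : (d+1) * R = (q-1) + (q-1) * d := by rw [hRq]; ring
    omega
  have hQeq : (d+1) * R = Q := le_antisymm hQge hQle
  have heq : ∀ y ∈ T.erase y₀, (d+1) * preCard f y = (preCard f y)^2 := by
    have hterm : ∀ y ∈ T.erase y₀, (d+1) * preCard f y ≤ (preCard f y)^2 := by
      intro y hy
      have h1 := hge y (Finset.mem_of_mem_erase hy) (Finset.ne_of_mem_erase hy)
      rw [sq]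
      exact Nat.mul_le_mul_right _ h1
    have hsum : ∑ y ∈ T.erase y₀, (d+1) * preCard f y = ∑ y ∈ T.erase y₀, (preCard f y)^2 := by
      rw [← Finset.mul_sum, ← hR, ← hQdef, hQeq]
    exact (Finset.sum_eq_sum_iff_of_le hterm).mp hsum
  refine ⟨y₀, hy₀T, hs1, ?_⟩
  intro y hy hne
  have hy' : y ∈ T.erase y₀ := Finset.mem_erase.mpr ⟨hne, hy⟩
  have h1 := heq y hy'
  have h2 := hge y hy hne
  have hpos : 0 < preCard f y := by omega
  rw [sq] at h1
  exact (Nat.eq_of_mul_eq_mul_right hpos h1).symm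
end

section
/- Let f : F_{2^n} → F_{2^n} be an APN map. Then |Image(f)| ≥ (2^n+1)/3 if n is odd and |Image(f)| ≥ (2^n+2)/3 if n is even. -/
open Finset
open scoped Classical

/-- `f` is almost perfect nonlinear: every equation `f (x+a) + f x = b` with `a ≠ 0`
has at most two solutions. -/
def IsAPN {F : Type*} [Field F] [Fintype F] (f : F → F) : Prop :=
  ∀ a b : F, a ≠ 0 → (Finset.univ.filter fun x => f (x + a) + f x = b).card ≤ 2

lemma pow_mod3_even (k : ℕ) : 2 ^ (2 * k) % 3 = 1 := by
  induction k with
  | zero => rfl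
  | succ k ih =>
      have : 2 * (k + 1) = 2 * k + 2 := by ring
      rw [this, pow_add]
      omega

lemma sq_sub_self (k : ℕ) : k * k - k = k * (k - 1) := by
  cases k with
  | zero => simp
  | succ k => rw [Nat.succ_sub_one, Nat.mul_succ, Nat.add_sub_cancel]

/-- an APN map on `F_{2^n}` satisfies `|Image f| ≥ (2^n+1)/3` for odd `n`
and `|Image f| ≥ (2^n+2)/3` for even `n`. -/
theorem apn_image_lower_bound {F : Type*} [Field F] [Fintype F] [CharP F 2] {n : ℕ}
    (hn : 0 < n) (hcard : Fintype.card F = 2 ^ n) {f : F → F} (hf : IsAPN f) :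
    (Odd n → 2 ^ n + 1 ≤ 3 * (Finset.image f Finset.univ).card) ∧
    (Even n → 2 ^ n + 2 ≤ 3 * (Finset.image f Finset.univ).card) := by
  set q := Fintype.card F with hq
  have hq2 : 2 ≤ q := by
    rw [hcard]
    calc 2 = 2 ^ 1 := (pow_one 2).symm
    _ ≤ 2 ^ n := Nat.pow_le_pow_right (by norm_num) hn
  set S : Finset F := Finset.image f Finset.univ with hS
  set m := S.card with hm
  -- sum of fiber sizes over image is q
  have hzero : ∀ y ∈ (Finset.univ : Finset F), y ∉ S → preCard f y = 0 := by
    intro y _ hy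
    rw [preCard, Finset.card_eq_zero, Finset.filter_eq_empty_iff]
    intro x _
    exact fun hfx => hy (Finset.mem_image.2 ⟨x, Finset.mem_univ x, hfx⟩)
  have h1 : ∑ y ∈ S, preCard f y = q := by
    rw [Finset.sum_subset (Finset.subset_univ S) hzero]
    exact (Finset.card_eq_sum_card_fiberwise (fun x _ => Finset.mem_univ (f x))).symm
  -- APN at b = 0
  have h2 : ∀ a : F, a ≠ 0 →
      ((Finset.univ : Finset F).filter fun x => f (x + a) = f x).card ≤ 2 := by
    intro a ha
    have h := hf a 0 ha
    have heq : ((Finset.univ : Finset F).filter fun x => f (x + a) + f x = 0)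
        = (Finset.univ : Finset F).filter fun x => f (x + a) = f x := by
      apply Finset.filter_congr
      intro x _
      rw [CharTwo.add_eq_iff_eq_add, zero_add]
    rwa [heq] at h
  -- the off-diagonal collision set
  set T : Finset (F × F) :=
    (Finset.univ : Finset (F × F)).filter (fun p => f p.1 = f p.2 ∧ p.1 ≠ p.2) with hT
  -- T.card = ∑ k(k-1)
  have h3 : T.card = ∑ y ∈ S, preCard f y * (preCard f y - 1) := by
    have hfib : ∀ p ∈ T, f p.1 ∈ (Finset.univ : Finset F) := fun p _ => Finset.mem_univ _
    rw [Finset.card_eq_sum_card_fiberwise hfib]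
    rw [← Finset.sum_subset (Finset.subset_univ S) (by
      intro y _ hy
      rw [Finset.card_eq_zero, Finset.filter_eq_empty_iff]
      intro p hp
      rw [hT, Finset.mem_filter] at hp
      intro hfy
      exact hy (Finset.mem_image.2 ⟨p.1, Finset.mem_univ _, hfy⟩))]
    apply Finset.sum_congr rfl
    intro y _
    have hset : T.filter (fun p => f p.1 = y)
        = ((Finset.univ : Finset F).filter fun x => f x = y).offDiag := by
      ext p
      simp only [hT, Finset.mem_filter, Finset.mem_offDiag, Finset.mem_univ, true_and]
      constructor
      · rintro ⟨⟨hfe, hne⟩, hy'⟩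
        exact ⟨hy', hfe.symm.trans hy', hne⟩
      · rintro ⟨h1', h2', h3'⟩
        exact ⟨⟨h1'.trans h2'.symm, h3'⟩, h1'⟩
    rw [hset, Finset.offDiag_card]
    exact sq_sub_self _
  -- T.card ≤ 2 * (q - 1)
  have h4 : T.card ≤ 2 * (q - 1) := by
    have hfib : ∀ p ∈ T, p.1 - p.2 ∈ (Finset.univ : Finset F).filter (fun a => a ≠ 0) := by
      intro p hp
      rw [hT, Finset.mem_filter] at hp
      exact Finset.mem_filter.2 ⟨Finset.mem_univ _, sub_ne_zero_of_ne hp.2.2⟩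
    rw [Finset.card_eq_sum_card_fiberwise hfib]
    calc ∑ a ∈ (Finset.univ : Finset F).filter (fun a => a ≠ 0),
          (T.filter fun p => p.1 - p.2 = a).card
        ≤ ∑ a ∈ (Finset.univ : Finset F).filter (fun a => a ≠ 0), 2 := by
          apply Finset.sum_le_sum
          intro a ha
          rw [Finset.mem_filter] at ha
          refine le_trans ?_ (h2 a ha.2)
          apply Finset.card_le_card_of_injOn (fun p => p.2)
          · intro p hp
            rw [Finset.mem_coe, Finset.mem_filter, hT, Finset.mem_filter] at hp
            obtain ⟨⟨_, hfp, _⟩, hpa⟩ := hp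
            have hp1 : p.1 = p.2 + a := by rw [← hpa]; ring
            rw [Finset.mem_coe, Finset.mem_filter]
            exact ⟨Finset.mem_univ _, by rw [← hp1]; exact hfp⟩
          · intro p hp p' hp' hpp
            rw [Finset.coe_filter, Set.mem_setOf_eq] at hp hp'
            have hpp2 : p.2 = p'.2 := hpp
            have hp1 : p.1 = p.2 + a := by rw [← hp.2]; ring
            have hp1' : p'.1 = p'.2 + a := by rw [← hp'.2]; ring
            exact Prod.ext (by rw [hp1, hp1', hpp2]) hpp2
      _ = 2 * (q - 1) := by
          rw [Finset.sum_const, smul_eq_mul, Finset.filter_ne' Finset.univ 0,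
            Finset.card_erase_of_mem (Finset.mem_univ 0), Finset.card_univ, ← hq,
            Nat.mul_comm]
  -- ∑ k^2 + 2 ≤ 3q
  have h5 : ∑ y ∈ S, (preCard f y) ^ 2 + 2 ≤ 3 * q := by
    have hsq : ∀ y ∈ S, (preCard f y) ^ 2
        = preCard f y * (preCard f y - 1) + preCard f y := by
      intro y _
      rw [sq, ← sq_sub_self]
      rcases Nat.eq_zero_or_pos (preCard f y) with h | h
      · simp [h]
      · have hle : preCard f y ≤ preCard f y * preCard f y :=
          Nat.le_mul_of_pos_left _ h
        omega
    rw [Finset.sum_congr rfl hsq, Finset.sum_add_distrib, h1, ← h3]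
    omega
  -- Cauchy-Schwarz
  have h6 : (q : ℝ) ^ 2 ≤ (m : ℝ) * (3 * q - 2) := by
    have cs := sq_sum_le_card_mul_sum_sq (s := S) (f := fun y => ((preCard f y : ℕ) : ℝ))
    have hsum : ∑ y ∈ S, ((preCard f y : ℕ) : ℝ) = (q : ℝ) := by
      rw [← h1]; push_cast; ring
    rw [hsum] at cs
    refine cs.trans ?_
    have h5' : (∑ y ∈ S, ((preCard f y : ℕ) : ℝ) ^ 2) ≤ 3 * (q : ℝ) - 2 := by
      have hc : ((∑ y ∈ S, (preCard f y) ^ 2 : ℕ) : ℝ) + 2 ≤ 3 * (q : ℝ) := by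
        exact_mod_cast h5
      push_cast at hc ⊢
      linarith
    exact mul_le_mul_of_nonneg_left h5' (Nat.cast_nonneg _)
  have key : q * q + 2 * m ≤ 3 * m * q := by
    have h : (q : ℝ) * q + 2 * m ≤ 3 * m * q := by nlinarith [h6]
    exact_mod_cast h
  constructor
  · intro hodd
    obtain ⟨k, hk⟩ := hodd
    have hmod : q % 3 = 2 := by
      have hp := pow_mod3_even k
      have hq' : q = 2 ^ (2 * k) * 2 := by rw [hcard, hk, pow_succ]
      omega
    rw [← hcard]
    by_contra h
    push_neg at h
    have h3m : 3 * m + 2 ≤ q := by omega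
    nlinarith [key, h3m, hq2, mul_le_mul_left h3m q]
  · intro heven
    obtain ⟨k, hk⟩ := heven
    have hmod : q % 3 = 1 := by
      rw [hcard, hk, ← two_mul]
      exact pow_mod3_even k
    rw [← hcard]
    by_contra h
    push_neg at h
    have h3m : 3 * m + 1 ≤ q := by omega
    nlinarith [key, h3m, hq2, mul_le_mul_left h3m q]
end

section
/- Let n be odd and f : F_{2^n} → F_{2^n} be an APN map with |Image(f)| = (2^n+1)/3. Then exactly one element y₀ ∈ Image(f) has exactly 2 preimages and every other element of Image(f) has exactly 3 preimages. -/
open Finset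
open scoped Classical

/-! Counting ordered pairs with `f x = f x'` as `x' = x + a` gives `∑ ω(y)² = ∑ₐ #{x | f (x + a) = f x}`;
the term `a = 0` contributes `2ⁿ` and, by APN-ness in characteristic two, every other term at
most `2`, so `∑ ω(y)² ≤ 3·2ⁿ - 2`. Together with `∑ ω(y) = 2ⁿ` and `3·|Im f| = 2ⁿ + 1` this forces
`∑_{y ∈ Im f} (ω(y) - 2)(ω(y) - 3) ≤ 0`, while each summand is a nonnegative integer. Hence every
`ω(y)` is `2` or `3`, and `∑ ω(y) = 3·|Im f| - #{y | ω(y) = 2}` shows that exactly one is `2`. -/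

theorem sum_preCard_image {F : Type*} [Fintype F] (f : F → F) :
    ∑ y ∈ image f univ, preCard f y = Fintype.card F :=
  (card_eq_sum_card_image f univ).symm

theorem preCard_apply_eq_card_filter_apply_add_eq {F : Type*} [Fintype F] [AddGroup F]
    (f : F → F) (x : F) : preCard f (f x) = #{a | f (x + a) = f x} := by
  unfold preCard
  exact card_equiv (Equiv.addLeft (-x)) (by simp)

theorem sum_preCard_sq_image {F : Type*} [Fintype F] [AddGroup F] (f : F → F) :
    ∑ y ∈ image f univ, preCard f y ^ 2 = ∑ a, #{x | f (x + a) = f x} := by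
  calc ∑ y ∈ image f univ, preCard f y ^ 2
      = ∑ x, preCard f (f x) := by
        rw [sum_comp]; simp only [sq, smul_eq_mul]; rfl
    _ = ∑ x, #{a | f (x + a) = f x} := by
        simp only [preCard_apply_eq_card_filter_apply_add_eq]
    _ = ∑ a, #{x | f (x + a) = f x} := by
        simp only [card_filter]; exact sum_comm

theorem IsAPN.card_filter_apply_add_eq_le_two {F : Type*} [Field F] [Fintype F] [CharP F 2]
    {f : F → F} (hf : IsAPN f) {a : F} (ha : a ≠ 0) : #{x | f (x + a) = f x} ≤ 2 := by
  simpa only [CharTwo.add_eq_zero] using hf a 0 ha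

theorem IsAPN.sum_preCard_sq_image_add_two_le {F : Type*} [Field F] [Fintype F] [CharP F 2]
    {f : F → F} (hf : IsAPN f) :
    ∑ y ∈ image f univ, preCard f y ^ 2 + 2 ≤ 3 * Fintype.card F := by
  have hpos := Fintype.card_pos (α := F)
  have hrest : ∑ a ∈ univ.erase 0, #{x | f (x + a) = f x} ≤ (Fintype.card F - 1) * 2 := by
    simpa [card_erase_of_mem] using sum_le_card_nsmul (univ.erase (0 : F)) _ 2
      fun a ha => hf.card_filter_apply_add_eq_le_two (ne_of_mem_erase ha)
  rw [sum_preCard_sq_image, ← add_sum_erase _ _ (mem_univ 0)]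
  simp only [add_zero, filter_true, card_univ]
  omega

theorem eq_two_or_eq_three_of_sum_sq_add_two_le {ι : Type*} {s : Finset ι} {w : ι → ℕ} {q : ℕ}
    (hsum : ∑ i ∈ s, w i = q) (hsq : ∑ i ∈ s, w i ^ 2 + 2 ≤ 3 * q) (hcard : 3 * #s = q + 1) :
    ∀ i ∈ s, w i = 2 ∨ w i = 3 := by
  have hterm (t : ℤ) : 0 ≤ (t - 2) * (t - 3) := by
    rcases le_or_gt t 2 with h | h <;> nlinarith
  have hexpand : ∑ i ∈ s, ((w i : ℤ) - 2) * ((w i : ℤ) - 3)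
      = ∑ i ∈ s, (w i : ℤ) ^ 2 - 5 * ∑ i ∈ s, (w i : ℤ) + 6 * #s := by
    rw [sum_congr rfl fun i _ => (by ring : ((w i : ℤ) - 2) * ((w i : ℤ) - 3)
      = (w i : ℤ) ^ 2 - 5 * w i + 6), sum_add_distrib, sum_sub_distrib, ← mul_sum, sum_const,
      nsmul_eq_mul, mul_comm (#s : ℤ)]
  have hzero : ∑ i ∈ s, ((w i : ℤ) - 2) * ((w i : ℤ) - 3) = 0 := by
    refine le_antisymm ?_ (sum_nonneg fun i _ => hterm _)
    zify at hsum hsq hcard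
    linarith
  intro i hi
  rcases mul_eq_zero.mp ((sum_eq_zero_iff_of_nonneg fun i _ => hterm _).mp hzero i hi) with h | h
  · left; omega
  · right; omega

theorem sum_add_card_filter_eq_two {ι : Type*} {s : Finset ι} {w : ι → ℕ}
    (hval : ∀ i ∈ s, w i = 2 ∨ w i = 3) : ∑ i ∈ s, w i + #{i ∈ s | w i = 2} = 3 * #s := by
  rw [card_filter, ← sum_add_distrib, mul_comm, ← smul_eq_mul, ← sum_const]
  refine sum_congr rfl fun i hi => ?_
  rcases hval i hi with h | h <;> simp [h]

theorem exists_eq_two_forall_ne_eq_three_of_sum_sq_add_two_le {ι : Type*} {s : Finset ι}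
    {w : ι → ℕ} {q : ℕ} (hsum : ∑ i ∈ s, w i = q) (hsq : ∑ i ∈ s, w i ^ 2 + 2 ≤ 3 * q)
    (hcard : 3 * #s = q + 1) :
    ∃ i₀ ∈ s, w i₀ = 2 ∧ ∀ i ∈ s, i ≠ i₀ → w i = 3 := by
  have hval := eq_two_or_eq_three_of_sum_sq_add_two_le hsum hsq hcard
  have hone : #{i ∈ s | w i = 2} = 1 := by
    have := sum_add_card_filter_eq_two hval
    omega
  obtain ⟨i₀, hi₀⟩ := card_eq_one.mp hone
  have hmem (i : ι) : i ∈ s ∧ w i = 2 ↔ i = i₀ := by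
    simpa only [mem_filter, mem_singleton] using Finset.ext_iff.mp hi₀ i
  obtain ⟨hi₀s, hi₀w⟩ := (hmem i₀).mpr rfl
  refine ⟨i₀, hi₀s, hi₀w, fun i hi hne => (hval i hi).resolve_left fun h => hne ?_⟩
  exact (hmem i).mp ⟨hi, h⟩

theorem apn_min_image_odd_preimage_distribution_general {F : Type*} [Field F] [Fintype F] [CharP F 2]
    {n : ℕ} (hcard : Fintype.card F = 2 ^ n) {f : F → F} (hf : IsAPN f)
    (himg : 3 * (Finset.image f Finset.univ).card = 2 ^ n + 1) :
    ∃ y₀ ∈ Finset.image f Finset.univ, preCard f y₀ = 2 ∧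
      ∀ y ∈ Finset.image f Finset.univ, y ≠ y₀ → preCard f y = 3 := by
  rw [← hcard] at himg
  exact exists_eq_two_forall_ne_eq_three_of_sum_sq_add_two_le (sum_preCard_image f)
    hf.sum_preCard_sq_image_add_two_le himg

/-- if `n` is odd and an APN map on `F_{2^n}` has minimal image size
`(2^n+1)/3`, then exactly one image element has 2 preimages and all others have 3. -/
theorem apn_min_image_odd_preimage_distribution {F : Type*} [Field F] [Fintype F] [CharP F 2]
    {n : ℕ} (hn : Odd n) (hcard : Fintype.card F = 2 ^ n) {f : F → F} (hf : IsAPN f)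
    (himg : 3 * (Finset.image f Finset.univ).card = 2 ^ n + 1) :
    ∃ y₀ ∈ Finset.image f Finset.univ, preCard f y₀ = 2 ∧
      ∀ y ∈ Finset.image f Finset.univ, y ≠ y₀ → preCard f y = 3 :=
  apn_min_image_odd_preimage_distribution_general hcard hf himg
end

section
/- Let q = 2^n and f(x) = x^k be an APN map on F_q. Then gcd(k, q−1) = 1 if n is odd and gcd(k, q−1) = 3 if n is even. -/
/-!
If `u ≠ 1` satisfies `u ^ k = 1`, then `x = (u + 1)⁻¹` satisfies `x + 1 = u x` in characteristic 2,
hence `(x + 1) ^ k = x ^ k`. The `gcd(k, q - 1)`-th roots of unity thus give `gcd(k, q - 1) - 1`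
solutions of `(x + 1) ^ k + x ^ k = 0`, and APN forces `gcd(k, q - 1) ≤ 3`. Since `q - 1` is odd the
gcd is `1` or `3`, and `3` needs `3 ∣ 2 ^ n - 1`, i.e. `n` even. Conversely, for even `n` the field
contains `𝔽₄ = {0, 1, w, w + 1}` with `w` a primitive cube root of unity; if `3 ∤ k`, then
`x ↦ x ^ k` is the identity or the Frobenius on `𝔽₄`, hence additive there, so all four elements
solve `(x + 1) ^ k + x ^ k = 1`. Hence `3 ∣ k` and the gcd is `3`.
-/

open Finset
open scoped Classical

theorem FiniteField.exists_isPrimitiveRoot_of_dvd_card_sub_one {F : Type*} [Field F] [Fintype F]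
    {d : ℕ} (hd : d ∣ Fintype.card F - 1) : ∃ ζ : F, IsPrimitiveRoot ζ d := by
  rw [← Fintype.card_units] at hd
  obtain ⟨ζ, hζ⟩ : ({ζ : Fˣ | orderOf ζ = d} : Finset Fˣ).Nonempty := by
    rw [← Finset.card_pos, IsCyclic.card_orderOf_eq_totient hd, Nat.totient_pos]
    exact Nat.pos_of_dvd_of_pos hd Fintype.card_pos
  exact ⟨ζ, IsPrimitiveRoot.coe_units_iff.2 ((mem_filter.1 hζ).2 ▸ IsPrimitiveRoot.orderOf ζ)⟩

theorem Nat.three_dvd_two_pow_sub_one_iff {n : ℕ} : 3 ∣ 2 ^ n - 1 ↔ Even n := by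
  rw [← Nat.modEq_iff_dvd' Nat.one_le_two_pow, ← ZMod.natCast_eq_natCast_iff, eq_comm]
  push_cast
  exact neg_one_pow_eq_one_iff_even (by decide)

theorem Nat.odd_two_pow_sub_one {n : ℕ} (hn : n ≠ 0) : Odd (2 ^ n - 1) :=
  Nat.Even.sub_odd Nat.one_le_two_pow ((Nat.even_pow' hn).2 even_two) odd_one

section CharTwo

variable {F : Type*} [Field F] [CharP F 2] {k : ℕ}

theorem CharTwo.inv_add_one_add_one_pow_add_pow {u : F} (hu : u ≠ 1) (huk : u ^ k = 1) :
    ((u + 1)⁻¹ + 1) ^ k + ((u + 1)⁻¹) ^ k = 0 := by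
  have hu0 : u + 1 ≠ 0 := CharTwo.add_eq_zero.not.2 hu
  have hshift : (u + 1)⁻¹ + 1 = u * (u + 1)⁻¹ := by
    field_simp
    linear_combination CharTwo.two_eq_zero (R := F)
  rw [hshift, mul_pow, huk, one_mul, CharTwo.add_self_eq_zero]

theorem IsPrimitiveRoot.sq_eq_add_one_of_charTwo {w : F} (hw : IsPrimitiveRoot w 3) :
    w ^ 2 = w + 1 := by
  have h := hw.geom_sum_eq_zero (by norm_num)
  simp only [Finset.sum_range_succ, Finset.sum_range_zero] at h
  linear_combination h - (w + 1) * CharTwo.two_eq_zero (R := F)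

theorem IsPrimitiveRoot.add_one_pow_add_pow_of_charTwo {w : F} (hw : IsPrimitiveRoot w 3)
    (hk : ¬ 3 ∣ k) : (w + 1) ^ k + w ^ k = 1 := by
  have hv : IsPrimitiveRoot (w ^ k) 3 :=
    hw.pow_of_coprime k ((Nat.Prime.coprime_iff_not_dvd Nat.prime_three).2 hk).symm
  rw [← hw.sq_eq_add_one_of_charTwo, ← pow_mul, mul_comm, pow_mul, hv.sq_eq_add_one_of_charTwo]
  linear_combination w ^ k * CharTwo.two_eq_zero (R := F)

end CharTwo

namespace IsAPN

variable {F : Type*} [Field F] [Fintype F] [CharP F 2] {k : ℕ}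

theorem card_pow_eq_one_le_three (hf : IsAPN fun x : F => x ^ k) :
    #(univ.filter fun u : F => u ^ k = 1) ≤ 3 := by
  set S := univ.filter fun u : F => u ^ k = 1
  have h : #(S.erase 1) ≤ 2 := by
    refine (card_le_card_of_injOn (fun u => (u + 1)⁻¹) (fun u hu => ?_) ?_).trans
      (hf 1 0 one_ne_zero)
    · obtain ⟨hu1, hu⟩ := mem_erase.1 hu
      simpa using CharTwo.inv_add_one_add_one_pow_add_pow hu1 (mem_filter.1 hu).2
    · exact fun u _ v _ huv => add_right_cancel (inv_injective huv)
  have := pred_card_le_card_erase (s := S) (a := 1)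
  omega

theorem gcd_le_three (hf : IsAPN fun x : F => x ^ k) : Nat.gcd k (Fintype.card F - 1) ≤ 3 := by
  set d := Nat.gcd k (Fintype.card F - 1)
  have hd : 0 < d := Nat.gcd_pos_of_pos_right _ (Nat.sub_pos_of_lt Fintype.one_lt_card)
  obtain ⟨ζ, hζ⟩ := FiniteField.exists_isPrimitiveRoot_of_dvd_card_sub_one (F := F)
    (Nat.gcd_dvd_right k _)
  calc d = #(Polynomial.nthRootsFinset d (1 : F)) := hζ.card_nthRootsFinset.symm
    _ ≤ #(univ.filter fun u : F => u ^ k = 1) := by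
      refine card_le_card fun u hu => mem_filter.2 ⟨mem_univ u, ?_⟩
      obtain ⟨t, ht⟩ := Nat.gcd_dvd_left k (Fintype.card F - 1)
      rw [ht, pow_mul, (Polynomial.mem_nthRootsFinset hd 1).1 hu, one_pow]
    _ ≤ 3 := hf.card_pow_eq_one_le_three

theorem three_dvd_of_isPrimitiveRoot (hf : IsAPN fun x : F => x ^ k) {w : F}
    (hw : IsPrimitiveRoot w 3) : 3 ∣ k := by
  by_contra hk
  have hk0 : k ≠ 0 := by rintro rfl; exact hk (dvd_zero 3)
  have hw0 : w ≠ 0 := hw.ne_zero (by norm_num)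
  have hw1 : w ≠ 1 := hw.ne_one (by norm_num)
  have hone : (1 : F) + 1 = 0 := CharTwo.add_self_eq_zero 1
  have hsol : ({0, 1, w, w + 1} : Finset F) ⊆ univ.filter fun x => (x + 1) ^ k + x ^ k = 1 := by
    intro x hx
    simp only [mem_insert, mem_singleton] at hx
    rcases hx with rfl | rfl | rfl | rfl
    · simp [hk0]
    · simp [hone, hk0]
    · simpa using hw.add_one_pow_add_pow_of_charTwo hk
    · rw [mem_filter, add_assoc, hone, add_zero]
      exact ⟨mem_univ _, (add_comm _ _).trans (hw.add_one_pow_add_pow_of_charTwo hk)⟩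
  have hfour : #({0, 1, w, w + 1} : Finset F) = 4 := by
    have : (0 : F) ≠ w + 1 := Ne.symm (CharTwo.add_eq_zero.not.2 hw1)
    rw [card_insert_of_notMem, card_insert_of_notMem, card_insert_of_notMem, card_singleton]
    all_goals simp [*, eq_comm]
  have := (card_le_card hsol).trans (hf 1 1 one_ne_zero)
  omega

end IsAPN

/-- if `x ↦ x^k` is APN on `F_{2^n}`, then `gcd(k, 2^n−1) = 1` for odd `n`
and `gcd(k, 2^n−1) = 3` for even `n`. -/
theorem apn_monomial_gcd {F : Type*} [Field F] [Fintype F] [CharP F 2] {n k : ℕ}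
    (hn : 0 < n) (hcard : Fintype.card F = 2 ^ n)
    (hf : IsAPN (fun x : F => x ^ k)) :
    (Odd n → Nat.gcd k (2 ^ n - 1) = 1) ∧ (Even n → Nat.gcd k (2 ^ n - 1) = 3) := by
  have hd_le : Nat.gcd k (2 ^ n - 1) ≤ 3 := hcard ▸ hf.gcd_le_three
  have hd_odd : Odd (Nat.gcd k (2 ^ n - 1)) :=
    (Nat.odd_two_pow_sub_one hn.ne').of_dvd_nat (Nat.gcd_dvd_right _ _)
  refine ⟨fun hn_odd => ?_, fun hn_even => ?_⟩
  · have h3 : ¬ 3 ∣ Nat.gcd k (2 ^ n - 1) := fun h =>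
      Nat.not_even_iff_odd.2 hn_odd <|
        Nat.three_dvd_two_pow_sub_one_iff.1 (h.trans (Nat.gcd_dvd_right _ _))
    rw [Nat.odd_iff] at hd_odd
    omega
  · have h3 : 3 ∣ 2 ^ n - 1 := Nat.three_dvd_two_pow_sub_one_iff.2 hn_even
    obtain ⟨w, hw⟩ := FiniteField.exists_isPrimitiveRoot_of_dvd_card_sub_one (hcard ▸ h3)
    exact le_antisymm hd_le <|
      Nat.le_of_dvd hd_odd.pos (Nat.dvd_gcd (hf.three_dvd_of_isPrimitiveRoot hw) h3)
end

section
/- Let n be even and f : F_{2^n} → F_{2^n} be an APN map with f(0) = 0 such that every nonzero element of Image(f) has at least 3 preimages. Then f is almost-3-to-1: 0 has exactly one preimage and every nonzero image element has exactly 3 preimages. -/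
open Finset
open scoped Classical

/-- if `n` is even, `f` is APN with `f 0 = 0` and every nonzero image
element has at least 3 preimages, then `f` is almost-3-to-1. -/
theorem apn_almost_three_to_one {F : Type*} [Field F] [Fintype F] [CharP F 2] {n : ℕ}
    (hn : Even n) (hn0 : 0 < n) (hcard : Fintype.card F = 2 ^ n) {f : F → F} (hf : IsAPN f)
    (h0 : f 0 = 0) (h3 : ∀ y ∈ Finset.image f Finset.univ, y ≠ 0 → 3 ≤ preCard f y) :
    preCard f 0 = 1 ∧
      ∀ y ∈ Finset.image f Finset.univ, y ≠ 0 → preCard f y = 3 := by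
  classical
  set q := Fintype.card F with hq
  set k : F → ℕ := preCard f with hk
  have hadd : ∀ x a : F, x + (x + a) = a := by
    intro x a
    rw [← add_assoc, CharTwo.add_self_eq_zero, zero_add]
  -- Step A: APN bound on collisions in each direction
  have hA : ∀ a : F, a ≠ 0 → (univ.filter fun x => f (x + a) = f x).card ≤ 2 := by
    intro a ha
    have h := hf a 0 ha
    have heq : (univ.filter fun x => f (x + a) = f x)
        = (univ.filter fun x => f (x + a) + f x = 0) := by
      apply filter_congr
      intro x _
      constructor
      · intro h'; rw [h']; exact CharTwo.add_self_eq_zero _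
      · intro h'
        have := CharTwo.add_eq_iff_eq_add.mp h'
        simpa using this
    rw [heq]; exact h
  have hfx_mem : ∀ x : F, x ∈ univ.filter fun x' => f x' = f x :=
    fun x => mem_filter.mpr ⟨mem_univ x, rfl⟩
  have hk_pos : ∀ x : F, 1 ≤ k (f x) :=
    fun x => card_pos.mpr ⟨x, hfx_mem x⟩
  -- count of nonzero directions fixing x
  have h1 : ∀ x : F, ((univ.filter fun a : F => a ≠ 0 ∧ f (x + a) = f x)).card
      = k (f x) - 1 := by
    intro x
    have hbij : ((univ.filter fun a : F => a ≠ 0 ∧ f (x + a) = f x)).card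
        = ((univ.filter fun x' : F => f x' = f x).erase x).card := by
      apply card_bij (fun a _ => x + a)
      · intro a ha
        rw [mem_filter] at ha
        obtain ⟨-, ha0, hfa⟩ := ha
        refine mem_erase.mpr ⟨?_, mem_filter.mpr ⟨mem_univ _, hfa⟩⟩
        intro hxa
        apply ha0
        have : x + a = x + 0 := by simpa using hxa
        exact add_left_cancel this
      · intro a _ b _ hab
        exact add_left_cancel hab
      · intro x' hx'
        rw [mem_erase, mem_filter] at hx'
        refine ⟨x + x', mem_filter.mpr ⟨mem_univ _, ?_, by rw [hadd]; exact hx'.2.2⟩,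
          by rw [hadd]⟩
        intro h'
        apply hx'.1
        have hx2 : x = 0 + x' := CharTwo.add_eq_iff_eq_add.mp h'
        rw [zero_add] at hx2
        exact hx2.symm
    rw [hbij, card_erase_of_mem (hfx_mem x)]
    rfl
  -- the key inequality
  have key : ∑ y : F, k y * (k y - 1) ≤ 2 * (q - 1) := by
    have step1 : ∑ y : F, k y * (k y - 1) = ∑ x : F, (k (f x) - 1) := by
      rw [← Finset.sum_fiberwise' univ f (fun y => k y - 1)]
      apply Finset.sum_congr rfl
      intro y _
      rw [Finset.sum_const]
      simp only [smul_eq_mul]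
      rfl
    have step2 : ∑ x : F, (k (f x) - 1)
        = ∑ a ∈ univ.filter (fun a : F => a ≠ 0),
            (univ.filter fun x => f (x + a) = f x).card := by
      simp_rw [← h1, Finset.card_filter]
      rw [Finset.sum_comm]
      rw [Finset.sum_filter]
      apply Finset.sum_congr rfl
      intro a _
      split_ifs with ha
      · apply Finset.sum_congr rfl
        intro x _
        simp [ha]
      · push_neg at ha
        simp [ha]
    have step3 : ∑ a ∈ univ.filter (fun a : F => a ≠ 0),
        (univ.filter fun x => f (x + a) = f x).card ≤ 2 * (q - 1) := by
      calc ∑ a ∈ univ.filter (fun a : F => a ≠ 0),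
            (univ.filter fun x => f (x + a) = f x).card
          ≤ ∑ _a ∈ univ.filter (fun a : F => a ≠ 0), 2 := by
            apply Finset.sum_le_sum
            intro a ha
            exact hA a (by simpa using (mem_filter.mp ha).2)
        _ = 2 * (q - 1) := by
            rw [Finset.sum_const, smul_eq_mul, mul_comm]
            congr 1
            rw [Finset.filter_ne', Finset.card_erase_of_mem (mem_univ 0), Finset.card_univ]
    rw [step1, step2]; exact step3
  -- restrict to the image
  set I : Finset F := (Finset.image f Finset.univ).erase 0 with hI
  have h0img : (0 : F) ∈ Finset.image f Finset.univ :=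
    Finset.mem_image.mpr ⟨0, mem_univ 0, h0⟩
  have hoff : ∀ y : F, y ∉ Finset.image f Finset.univ → k y = 0 := by
    intro y hy
    rw [hk]
    unfold preCard
    rw [Finset.card_eq_zero, Finset.filter_eq_empty_iff]
    intro x _ hx
    exact hy (Finset.mem_image.mpr ⟨x, mem_univ x, hx⟩)
  have hsumk : ∑ y : F, k y = q := by
    rw [hq, ← Finset.card_univ]
    rw [Finset.card_eq_sum_card_fiberwise (f := f) (fun x _ => mem_univ (f x))]
    rfl
  have hsplit : k 0 + ∑ y ∈ I, k y = q := by
    rw [← hsumk]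
    rw [← Finset.sum_subset (Finset.subset_univ (Finset.image f Finset.univ))
      (fun y _ hy => hoff y hy)]
    rw [hI, Finset.add_sum_erase _ k h0img]
  have hsplit2 : k 0 * (k 0 - 1) + ∑ y ∈ I, k y * (k y - 1) ≤ 2 * (q - 1) := by
    refine le_trans ?_ key
    rw [← Finset.sum_subset (Finset.subset_univ (Finset.image f Finset.univ))
      (fun y _ hy => by simp [hoff y hy])]
    rw [hI, Finset.add_sum_erase _ (fun y => k y * (k y - 1)) h0img]
  have hky3 : ∀ y ∈ I, 3 ≤ k y := by
    intro y hy
    rw [hI, Finset.mem_erase] at hy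
    exact h3 y hy.2 hy.1
  have hlow : ∀ y ∈ I, 2 * k y ≤ k y * (k y - 1) := by
    intro y hy
    have := hky3 y hy
    calc 2 * k y ≤ (k y - 1) * k y := Nat.mul_le_mul_right _ (by omega)
      _ = k y * (k y - 1) := mul_comm _ _
  have hsumlow : 2 * ∑ y ∈ I, k y ≤ ∑ y ∈ I, k y * (k y - 1) := by
    rw [Finset.mul_sum]
    exact Finset.sum_le_sum hlow
  have hN1 : 1 ≤ k 0 := by
    have := hk_pos 0
    rwa [h0] at this
  set N := k 0 with hN
  -- N ≤ 2
  have hNle : N ≤ 2 := by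
    by_contra hc
    push_neg at hc
    have h2 : N * (N - 1) + 2 * (q - N) ≤ 2 * (q - 1) :=
      le_trans (by omega) (le_trans (Nat.add_le_add_left hsumlow _) hsplit2) |>.trans_eq rfl
    have hNq : N ≤ q := by omega
    nlinarith [Nat.sub_add_cancel hNq, Nat.sub_add_cancel hN1,
      Nat.sub_add_cancel (le_trans hN1 hNq)]
  have hNor : N = 1 ∨ N = 2 := by omega
  have hS2le : ∑ y ∈ I, k y * (k y - 1) ≤ 2 * ∑ y ∈ I, k y := by
    rcases hNor with h | h <;> rw [h] at hsplit2 hsplit <;> omega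
  have heq : ∑ y ∈ I, 2 * k y = ∑ y ∈ I, k y * (k y - 1) := by
    have l1 : ∑ y ∈ I, 2 * k y = 2 * ∑ y ∈ I, k y := (Finset.mul_sum _ _ _).symm
    omega
  have hk3 : ∀ y ∈ I, k y = 3 := by
    intro y hy
    have hpoint := (Finset.sum_eq_sum_iff_of_le hlow).mp heq y hy
    have h3y := hky3 y hy
    have hmul : k y * 2 = k y * (k y - 1) := by rw [← hpoint]; ring
    have := Nat.eq_of_mul_eq_mul_left (by omega) hmul
    omega
  have hN1eq : N = 1 := by
    rcases hNor with h | h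
    · exact h
    · exfalso
      have hS1 : ∑ y ∈ I, k y = 3 * I.card := by
        rw [Finset.sum_congr rfl hk3, Finset.sum_const, smul_eq_mul, mul_comm]
      obtain ⟨m, hm⟩ := hn
      have h4 : (2 : ℕ) ^ n = 4 ^ m := by subst hm; rw [pow_add, ← mul_pow]; norm_num
      have hm3 : (4 : ℕ) ^ m % 3 = 1 := by rw [Nat.pow_mod]; norm_num
      have hqmod : q % 3 = 1 := by rw [hcard, h4]; exact hm3
      rw [h, hS1] at hsplit
      omega
  exact ⟨hN1eq, fun y hy hy0 => hk3 y (Finset.mem_erase.mpr ⟨hy0, hy⟩)⟩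
end

section
/- Let m, i ≥ 2 be even, gcd(k, m) = 1, and let α ∈ F_{2^m} be a non-cube. Define f : F_{2^m} × F_{2^m} → F_{2^m} × F_{2^m} by f(x,y) = (x^{2^k+1} + α y^{(2^k+1)2^i}, xy). Then f(x,y) = f(u,v) if and only if (x,y) = (ωu, ω²v) for some ω ∈ F_4*; in particular f is almost-3-to-1. -/
open Finset
open scoped Classical

/-!
Write `N = 2 ^ k + 1` and `Q = 2 ^ i`; `N` is divisible by 3 because `k` is odd, and so is
`Q - 1` because `i` is even. For the cubes `A = x ^ N`, `B = y ^ N`, `C = u ^ N`, `D = v ^ N`,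
the equation `f (x, y) = f (u, v)` gives `A + α B ^ Q = C + α D ^ Q` and `A B = C D`. In
characteristic 2, if `B ≠ D` these force `α B (B + D) ^ (Q - 1) = C` (or the same with the two
points exchanged), which exhibits `α` as a cube. Hence `B = D` and `A = C`. As
`gcd (2 ^ k + 1, 2 ^ m - 1) = 3`, equal `N`-th powers differ by a cube root of unity, and
`x y = u v` ties the two roots together. So the fibres of `f` are the orbits of the three cube
roots of unity acting by `(x, y) ↦ (ω x, ω² y)`, an action that is free away from `(0, 0)`.
-/

open Polynomial

theorem Nat.three_dvd_two_pow_add_one {k : ℕ} (hk : Odd k) : 3 ∣ 2 ^ k + 1 := by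
  simpa using hk.nat_add_dvd_pow_add_pow 2 1

theorem Nat.three_dvd_two_pow_sub_one {i : ℕ} (hi : Even i) : 3 ∣ 2 ^ i - 1 := by
  obtain ⟨j, rfl⟩ := hi
  have h := Nat.sub_dvd_pow_sub_pow (2 ^ 2) 1 j
  rwa [one_pow, ← pow_mul, two_mul] at h

/-- Since `gcd (2k, m) = 2`, the orders `q ^ (2k) - 1` (a multiple of `q ^ k + 1`) and
`q ^ m - 1` have greatest common divisor `q ^ 2 - 1`. -/
theorem pow_sq_sub_one_eq_one_of_pow_add_one_eq_one {M : Type*} [Monoid M] {a : M}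
    {q k m : ℕ} (hm : Even m) (hk : k.Coprime m) (hak : a ^ (q ^ k + 1) = 1)
    (ham : a ^ (q ^ m - 1) = 1) : a ^ (q ^ 2 - 1) = 1 := by
  have ha2k : a ^ (q ^ (k * 2) - 1) = 1 := by
    rw [pow_mul, ← one_pow 2, Nat.sq_sub_sq, pow_mul, hak, one_pow]
  have hgcd : (k * 2).gcd m = 2 := by
    rw [hk.gcd_mul_left_cancel, Nat.gcd_eq_left hm.two_dvd]
  have := pow_gcd_eq_one.mpr ⟨ha2k, ham⟩
  rwa [Nat.pow_sub_one_gcd_pow_sub_one, hgcd] at this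

theorem exists_pow_three_eq_one_of_pow_two_pow_add_one_eq {K : Type*} [Field K] [Fintype K]
    {m k : ℕ} (hm : Even m) (hk : k.Coprime m) (hcard : Fintype.card K = 2 ^ m) {a b : K}
    (hab : a ^ (2 ^ k + 1) = b ^ (2 ^ k + 1)) : ∃ ω : K, ω ^ 3 = 1 ∧ a = ω * b := by
  rcases eq_or_ne b 0 with rfl | hb
  · exact ⟨1, one_pow 3, by simpa using hab⟩
  have hζ : (a / b) ^ (2 ^ k + 1) = 1 := by rw [div_pow, hab, div_self (pow_ne_zero _ hb)]
  have hζ0 : a / b ≠ 0 := by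
    rintro h0
    simp [h0] at hζ
  refine ⟨a / b, ?_, (div_mul_cancel₀ a hb).symm⟩
  simpa using pow_sq_sub_one_eq_one_of_pow_add_one_eq_one hm hk hζ
    (hcard ▸ FiniteField.pow_card_sub_one_eq_one _ hζ0)

theorem mul_pow_eq_of_pow_three_eq_one {M : Type*} [CommMonoid M] {ω : M} (hω : ω ^ 3 = 1)
    {n : ℕ} (hn : 3 ∣ n) (a : M) : (ω * a) ^ n = a ^ n := by
  obtain ⟨t, rfl⟩ := hn
  rw [mul_pow, pow_mul, hω, one_pow, one_mul]

theorem exists_cube_of_mul_cube_eq_cube {K : Type*} [Field K] {α c d : K} (hd : d ≠ 0)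
    (h : α * d ^ 3 = c ^ 3) : ∃ β : K, β ^ 3 = α :=
  ⟨c / d, by rw [div_pow, ← h, mul_div_cancel_right₀ _ (pow_ne_zero 3 hd)]⟩

section CharTwo

variable {K : Type*} [Field K] [CharP K 2]

theorem mul_mul_add_pow_sub_one_eq {α A B C D : K} {i : ℕ}
    (h₁ : A + α * B ^ 2 ^ i = C + α * D ^ 2 ^ i) (h₂ : A * B = C * D) (hBD : B ≠ D) :
    α * (B * (B + D) ^ (2 ^ i - 1)) = C := by
  have hsum : B + D ≠ 0 := fun h => hBD (CharTwo.add_eq_zero.mp h)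
  have hfrob : (B + D) ^ 2 ^ i = B ^ 2 ^ i + D ^ 2 ^ i := add_pow_char_pow B D 2 i
  -- `A + C = α (B + D) ^ 2 ^ i` and `(A + C) B = C (B + D)`
  have hmul : α * (B + D) ^ 2 ^ i * B = C * (B + D) := by
    rw [hfrob]
    linear_combination h₂ - B * h₁ + (α * B ^ 2 ^ i * B - C * B) * CharTwo.two_eq_zero (R := K)
  have hQ : (B + D) ^ 2 ^ i = (B + D) ^ (2 ^ i - 1) * (B + D) := by
    rw [← pow_succ, Nat.sub_add_cancel Nat.one_le_two_pow]
  apply mul_right_cancel₀ hsum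
  rw [← hmul, hQ]
  ring

theorem pow_eq_pow_of_add_mul_pow_eq {α : K} (hα : ¬∃ β : K, β ^ 3 = α) {i N : ℕ} (hi : Even i)
    (hN : 3 ∣ N) {x y u v : K}
    (h₁ : x ^ N + α * (y ^ N) ^ 2 ^ i = u ^ N + α * (v ^ N) ^ 2 ^ i)
    (h₂ : x ^ N * y ^ N = u ^ N * v ^ N) : y ^ N = v ^ N := by
  obtain ⟨s, hs⟩ := Nat.three_dvd_two_pow_sub_one hi
  obtain ⟨t, rfl⟩ := hN
  simp only [pow_mul'] at h₁ h₂ ⊢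
  have hcube : ∀ {a b c d : K}, a ^ 3 + α * (b ^ 3) ^ 2 ^ i = c ^ 3 + α * (d ^ 3) ^ 2 ^ i →
      a ^ 3 * b ^ 3 = c ^ 3 * d ^ 3 → b ^ 3 ≠ d ^ 3 → b ≠ 0 → ∃ β : K, β ^ 3 = α := by
    intro a b c d h₁ h₂ hbd hb
    have hsum : b ^ 3 + d ^ 3 ≠ 0 := fun h => hbd (CharTwo.add_eq_zero.mp h)
    refine exists_cube_of_mul_cube_eq_cube (c := c) (mul_ne_zero hb (pow_ne_zero s hsum)) ?_
    rw [← mul_mul_add_pow_sub_one_eq h₁ h₂ hbd, hs]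
    ring
  by_contra hyv
  rcases eq_or_ne (y ^ t) 0 with hy | hy
  · refine hα (hcube h₁.symm h₂.symm (Ne.symm hyv) ?_)
    rintro hv
    simp [hy, hv] at hyv
  · exact hα (hcube h₁ h₂ hyv hy)

end CharTwo

theorem exists_pow_three_eq_one_of_mul_eq {K : Type*} [Field K] {x y u v ω θ : K}
    (hω : ω ^ 3 = 1) (hθ : θ ^ 3 = 1) (hx : x = ω * u) (hy : y = θ * v) (hxy : x * y = u * v) :
    ∃ ζ : K, ζ ^ 3 = 1 ∧ x = ζ * u ∧ y = ζ ^ 2 * v := by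
  rcases eq_or_ne u 0 with rfl | hu
  · refine ⟨θ ^ 2, by linear_combination (θ ^ 3 + 1) * hθ, by simp [hx], ?_⟩
    rw [hy]
    linear_combination (-θ * v) * hθ
  rcases eq_or_ne v 0 with rfl | hv
  · exact ⟨ω, hω, hx, by simp [hy]⟩
  have hωθ : ω * θ = 1 := by
    refine mul_right_cancel₀ (mul_ne_zero hu hv) ?_
    rw [hx, hy] at hxy
    linear_combination hxy
  refine ⟨ω, hω, hx, ?_⟩
  rw [hy]
  linear_combination (-θ * v) * hω + ω ^ 2 * v * hωθ

def zhouPottMap {K : Type*} [Field K] (α : K) (k i : ℕ) (p : K × K) : K × K :=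
  (p.1 ^ (2 ^ k + 1) + α * p.2 ^ ((2 ^ k + 1) * 2 ^ i), p.1 * p.2)

theorem zhouPottMap_eq_iff {K : Type*} [Field K] [Fintype K] [CharP K 2] {m i k : ℕ}
    (hm : Even m) (hi : Even i) (hk : k.Coprime m) (hcard : Fintype.card K = 2 ^ m) {α : K}
    (hα : ¬∃ β : K, β ^ 3 = α) (x y u v : K) :
    zhouPottMap α k i (x, y) = zhouPottMap α k i (u, v) ↔
      ∃ ω : K, ω ^ 3 = 1 ∧ x = ω * u ∧ y = ω ^ 2 * v := by
  have h3 : 3 ∣ 2 ^ k + 1 :=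
    Nat.three_dvd_two_pow_add_one (hk.symm.coprime_dvd_left hm.two_dvd).odd_of_left
  simp only [zhouPottMap, Prod.mk.injEq, pow_mul]
  constructor
  · rintro ⟨h₁, h₂⟩
    have hyv := pow_eq_pow_of_add_mul_pow_eq hα hi h3 h₁ (by rw [← mul_pow, h₂, mul_pow])
    have hxu : x ^ (2 ^ k + 1) = u ^ (2 ^ k + 1) := add_right_cancel (hyv ▸ h₁)
    obtain ⟨ω, hω, hx⟩ := exists_pow_three_eq_one_of_pow_two_pow_add_one_eq hm hk hcard hxu
    obtain ⟨θ, hθ, hy⟩ := exists_pow_three_eq_one_of_pow_two_pow_add_one_eq hm hk hcard hyv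
    exact exists_pow_three_eq_one_of_mul_eq hω hθ hx hy h₂
  · rintro ⟨ω, hω, rfl, rfl⟩
    have hω2 : (ω ^ 2) ^ 3 = 1 := by rw [← pow_mul, mul_comm, pow_mul, hω, one_pow]
    refine ⟨by rw [mul_pow_eq_of_pow_three_eq_one hω h3, mul_pow_eq_of_pow_three_eq_one hω2 h3],
      by linear_combination u * v * hω⟩

theorem card_nthRootsFinset_of_dvd_card_sub_one {K : Type*} [Field K] [Fintype K] {p : ℕ}
    [Fact p.Prime] (hp : p ∣ Fintype.card K - 1) : #(nthRootsFinset p (1 : K)) = p := by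
  obtain ⟨ζ, hζ⟩ := exists_prime_orderOf_dvd_card (G := Kˣ) p (by rwa [Fintype.card_units])
  have hprim : IsPrimitiveRoot (ζ : K) p := by
    rw [IsPrimitiveRoot.coe_units_iff, ← hζ]
    exact IsPrimitiveRoot.orderOf ζ
  exact hprim.card_nthRootsFinset

theorem injOn_nthRootsFinset_three {K : Type*} [Field K] {p : K × K} (hp : p ≠ 0) :
    Set.InjOn (fun ω : K => (ω * p.1, ω ^ 2 * p.2)) (nthRootsFinset 3 (1 : K)) := by
  intro ω₁ h₁ ω₂ h₂ he
  rw [Finset.mem_coe, mem_nthRootsFinset three_pos] at h₁ h₂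
  simp only [Prod.mk.injEq] at he
  rcases eq_or_ne p.1 0 with hp₁ | hp₁
  · have hp₂ : p.2 ≠ 0 := fun h => hp (Prod.ext hp₁ h)
    have hsq : ω₁ ^ 2 = ω₂ ^ 2 := mul_right_cancel₀ hp₂ he.2
    -- `ω = (ω ^ 2) ^ 2` for a cube root of unity
    linear_combination (ω₁ ^ 2 + ω₂ ^ 2) * hsq - ω₁ * h₁ + ω₂ * h₂
  · exact mul_right_cancel₀ hp₁ he.1

section Fibers

variable {K : Type*} [Field K] [Fintype K] {g : K × K → K × K}

theorem preCard_eq_card_image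
    (hg : ∀ x y u v : K, g (x, y) = g (u, v) ↔ ∃ ω : K, ω ^ 3 = 1 ∧ x = ω * u ∧ y = ω ^ 2 * v)
    (p : K × K) :
    preCard g (g p) =
      #((nthRootsFinset 3 (1 : K)).image fun ω : K => ((ω * p.1, ω ^ 2 * p.2) : K × K)) := by
  unfold preCard
  congr 1
  ext ⟨x, y⟩
  simp only [mem_filter, mem_univ, true_and, mem_image, mem_nthRootsFinset three_pos, hg,
    Prod.mk.injEq]
  exact exists_congr fun ω => and_congr_right' (and_congr eq_comm eq_comm)

theorem almost_three_to_one_of_eq_iff (h3 : #(nthRootsFinset 3 (1 : K)) = 3)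
    (hg : ∀ x y u v : K, g (x, y) = g (u, v) ↔ ∃ ω : K, ω ^ 3 = 1 ∧ x = ω * u ∧ y = ω ^ 2 * v) :
    ∃ z₀ ∈ univ.image g, preCard g z₀ = 1 ∧ ∀ z ∈ univ.image g, z ≠ z₀ → preCard g z = 3 := by
  refine ⟨g 0, mem_image_of_mem g (mem_univ 0), ?_, ?_⟩
  · rw [preCard_eq_card_image hg]
    simp [Finset.image_const ⟨1, (mem_nthRootsFinset three_pos _).mpr (one_pow 3)⟩]
  · rintro z hz hz₀
    obtain ⟨p, -, rfl⟩ := mem_image.mp hz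
    rw [preCard_eq_card_image hg, card_image_of_injOn (injOn_nthRootsFinset_three ?_), h3]
    rintro rfl
    exact hz₀ rfl

end Fibers

theorem zhou_pott_almost_three_to_one_general {K : Type*} [Field K] [Fintype K] [CharP K 2]
    {m i k : ℕ} (hm : Even m) (hi : Even i)
    (hk : Nat.gcd k m = 1) (hcard : Fintype.card K = 2 ^ m)
    {α : K} (hα : ¬∃ β : K, β ^ 3 = α)
    (f : K × K → K × K)
    (hfdef : ∀ p : K × K, f p = (p.1 ^ (2 ^ k + 1) + α * p.2 ^ ((2 ^ k + 1) * 2 ^ i), p.1 * p.2)) :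
    (∀ x y u v : K, f (x, y) = f (u, v) ↔
      ∃ ω : K, ω ^ 3 = 1 ∧ x = ω * u ∧ y = ω ^ 2 * v) ∧
    (∃ z₀ ∈ Finset.image f Finset.univ, preCard f z₀ = 1 ∧
      ∀ z ∈ Finset.image f Finset.univ, z ≠ z₀ → preCard f z = 3) := by
  obtain rfl : f = zhouPottMap α k i := funext hfdef
  have hfib := zhouPottMap_eq_iff hm hi hk hcard hα
  have h3 : #(nthRootsFinset 3 (1 : K)) = 3 :=
    card_nthRootsFinset_of_dvd_card_sub_one (hcard ▸ Nat.three_dvd_two_pow_sub_one hm)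
  exact ⟨hfib, almost_three_to_one_of_eq_iff h3 hfib⟩

/-- Zhou–Pott maps: for even `m, i ≥ 2`, `gcd(k,m)=1` and a non-cube `α`,
the map `f(x,y) = (x^{2^k+1} + α y^{(2^k+1)2^i}, xy)` satisfies `f(x,y)=f(u,v)` iff
`(x,y)=(ωu, ω²v)` for some cube root of unity `ω ≠ 0` (i.e. `ω ∈ F₄*`); in particular
`f` is almost-3-to-1. -/
theorem zhou_pott_almost_three_to_one {K : Type*} [Field K] [Fintype K] [CharP K 2]
    {m i k : ℕ} (hm : Even m) (hm2 : 2 ≤ m) (hi : Even i) (hi2 : 2 ≤ i)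
    (hk : Nat.gcd k m = 1) (hcard : Fintype.card K = 2 ^ m)
    {α : K} (hα : ¬∃ β : K, β ^ 3 = α)
    (f : K × K → K × K)
    (hfdef : ∀ p : K × K, f p = (p.1 ^ (2 ^ k + 1) + α * p.2 ^ ((2 ^ k + 1) * 2 ^ i), p.1 * p.2)) :
    (∀ x y u v : K, f (x, y) = f (u, v) ↔
      ∃ ω : K, ω ^ 3 = 1 ∧ x = ω * u ∧ y = ω ^ 2 * v) ∧
    (∃ z₀ ∈ Finset.image f Finset.univ, preCard f z₀ = 1 ∧
      ∀ z ∈ Finset.image f Finset.univ, z ≠ z₀ → preCard f z = 3) :=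
  zhou_pott_almost_three_to_one_general hm hi hk hcard hα f hfdef
end

section
/- Let m be odd and a ∈ F_{2^{3m}} be nonzero. The map f : F_{2^{3m}} → F_{2^{3m}} given by f(x) = x³ + a⁻¹ Tr_{2^{3m}/2³}(a³x⁹ + a⁶x¹⁸) satisfies M_1(f) = 2^{3m−1} and M_4(f) = 2^{3m−3}; in particular |Image(f)| = 5·2^{3m−3}. -/
open Finset
open scoped Classical

/-- The relative trace from `F_{2^{3m}}` to `F_8`, `x ↦ Σ_{j=0}^{m−1} x^{8^j}`. -/
def relTrace8 {F : Type*} [Field F] (m : ℕ) (x : F) : F :=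
  ∑ j ∈ Finset.range m, x ^ (8 ^ j : ℕ)

section BCLAux

set_option linter.unusedSectionVars false

open Polynomial in
section

variable {F : Type*} [Field F] [CharP F 2] {m : ℕ}

lemma bcl_pow8pow {c : F} (hc : c ^ 8 = c) (j : ℕ) : c ^ (8 ^ j : ℕ) = c := by
  induction j with
  | zero => simp
  | succ j ih => rw [pow_succ, pow_mul, ih, hc]

lemma bcl_sq8 {c : F} (hc : c ^ 8 = c) : (c ^ 2) ^ 8 = c ^ 2 := by
  calc (c ^ 2) ^ 8 = (c ^ 8) ^ 2 := by rw [← pow_mul, ← pow_mul, mul_comm]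
  _ = c ^ 2 := by rw [hc]

lemma bcl_cube8 {c : F} (hc : c ^ 8 = c) : (c ^ 3) ^ 8 = c ^ 3 := by
  calc (c ^ 3) ^ 8 = (c ^ 8) ^ 3 := by rw [← pow_mul, ← pow_mul, mul_comm]
  _ = c ^ 3 := by rw [hc]

lemma bcl_E8_add {x y : F} (hx : x ^ 8 = x) (hy : y ^ 8 = y) : (x + y) ^ 8 = x + y := by
  have h : (x + y) ^ (2 ^ 3 : ℕ) = x ^ (2 ^ 3 : ℕ) + y ^ (2 ^ 3 : ℕ) := add_pow_char_pow ..
  norm_num at h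
  rw [h, hx, hy]

lemma bcl_tr_add (x y : F) :
    relTrace8 m (x + y) = relTrace8 m x + relTrace8 m y := by
  unfold relTrace8
  rw [← Finset.sum_add_distrib]
  refine Finset.sum_congr rfl fun j _ => ?_
  have h8 : (8 : ℕ) ^ j = 2 ^ (3 * j) := by rw [pow_mul]; norm_num
  rw [h8]
  exact add_pow_char_pow ..

lemma bcl_tr_smul {c : F} (hc : c ^ 8 = c) (x : F) :
    relTrace8 m (c * x) = c * relTrace8 m x := by
  unfold relTrace8
  rw [Finset.mul_sum]
  exact Finset.sum_congr rfl fun j _ => by rw [mul_pow, bcl_pow8pow hc]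

lemma bcl_tr_sq (x : F) : relTrace8 m (x ^ 2) = (relTrace8 m x) ^ 2 := by
  unfold relTrace8
  rw [sum_pow_char]
  exact Finset.sum_congr rfl fun j _ => by rw [← pow_mul, ← pow_mul, mul_comm]

lemma bcl_tr_const (hm : Odd m) {β : F} (hβ : β ^ 8 = β) : relTrace8 m β = β := by
  unfold relTrace8
  obtain ⟨k, hk⟩ := hm
  have h2 : (2 : F) = 0 := CharTwo.two_eq_zero
  calc (∑ j ∈ Finset.range m, β ^ (8 ^ j : ℕ)) = ∑ j ∈ Finset.range m, β :=
        Finset.sum_congr rfl fun j _ => bcl_pow8pow hβ j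
    _ = (m : F) * β := by rw [Finset.sum_const, Finset.card_range, nsmul_eq_mul]
    _ = β := by subst hk; push_cast; rw [h2]; ring

lemma bcl_L01 {z : F} (hz : z ^ 8 = z) :
    z + z ^ 2 + z ^ 4 = 0 ∨ z + z ^ 2 + z ^ 4 = 1 := by
  have h2 : (2 : F) = 0 := CharTwo.two_eq_zero
  have hmul : (z + z ^ 2 + z ^ 4) * ((z + z ^ 2 + z ^ 4) + 1) = 0 := by
    linear_combination hz + (z + z^6 + z^5 + z^4 + z^3 + z^2) * h2
  rcases mul_eq_zero.mp hmul with h | h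
  · exact Or.inl h
  · exact Or.inr (by linear_combination h - h2)

lemma bcl_f8 {s c : F} (hs : s ^ 8 = s) (hc : c ^ 8 = c) :
    c + (c^3 + c^2*s + c*s^2) + (c^3 + c^2*s + c*s^2)^2 = 0 ↔
      (c = 0 ∨ (s + s ^ 2 + s ^ 4 = 1 ∧ c + c ^ 2 + c ^ 4 = 0)) := by
  have h2 : (2 : F) = 0 := CharTwo.two_eq_zero
  constructor
  · intro hD
    rcases bcl_L01 hc with hLc | hLc
    · have hc4 : c ^ 4 = c + c ^ 2 := by linear_combination hLc - (c + c^2) * h2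
      rcases bcl_L01 hs with hLs | hLs
      · have hs4 : s ^ 4 = s + s ^ 2 := by linear_combination hLs - (s + s^2) * h2
        have hcsq : c ^ 2 = 0 := by
          linear_combination hD - ((c^2 + 2*c*s + 3*s^2 + 1) * hc4 + c^2 * hs4
            + (c^3*s^3 + c^3*s + c^3 + 2*c^2*s^2 + 2*c^2*s + 2*c*s^2 + c) * h2)
        exact Or.inl (by simpa [pow_eq_zero_iff] using hcsq)
      · exact Or.inr ⟨hLs, hLc⟩
    · exfalso
      have hc4 : c ^ 4 = 1 + c + c ^ 2 := by linear_combination hLc - (c + c^2) * h2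
      rcases bcl_L01 hs with hLs | hLs
      · have hs4 : s ^ 4 = s + s ^ 2 := by linear_combination hLs - (s + s^2) * h2
        have hx : 1 + s ^ 2 = 0 := by
          linear_combination hD - ((c^2 + 2*c*s + 3*s^2 + 1) * hc4 + c^2 * hs4
            + (c^3*s^3 + c^3*s + c^3 + 2*c^2*s^2 + 2*c^2*s + c^2 + 2*c*s^2 + c*s + c + s^2) * h2)
        have hs1sq : (s + 1) ^ 2 = 0 := by linear_combination hx + s * h2
        have hs1 : s = 1 := by
          have := pow_eq_zero_iff (n := 2) (by norm_num) |>.mp hs1sq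
          linear_combination this - h2
        rw [hs1] at hLs
        have : (1 : F) = 0 := by linear_combination hLs - h2
        exact one_ne_zero this
      · have hs4 : s ^ 4 = 1 + s + s ^ 2 := by linear_combination hLs - (s + s^2) * h2
        have hx : 1 + s ^ 2 + c ^ 2 = 0 := by
          linear_combination hD - ((c^2 + 2*c*s + 3*s^2 + 1) * hc4 + c^2 * hs4
            + (c^3*s^3 + c^3*s + c^3 + 2*c^2*s^2 + 2*c^2*s + c^2 + 2*c*s^2 + c*s + c + s^2) * h2)
        have hcs1sq : (c + s + 1) ^ 2 = 0 := by linear_combination hx + (c*s + c + s) * h2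
        have hcs : c = s + 1 := by
          have := pow_eq_zero_iff (n := 2) (by norm_num) |>.mp hcs1sq
          linear_combination this - (s + 1) * h2
        rw [hcs] at hLc
        have : (1 : F) = 0 := by
          linear_combination hLc - hLs - (2*s^3 + 3*s^2 + 3*s + 1) * h2
        exact one_ne_zero this
  · intro h
    rcases h with h0 | ⟨hLs, hLc⟩
    · subst h0; ring
    · have hc4 : c ^ 4 = c + c ^ 2 := by linear_combination hLc - (c + c^2) * h2
      have hs4 : s ^ 4 = 1 + s + s ^ 2 := by linear_combination hLs - (s + s^2) * h2
      linear_combination (c^2 + 2*c*s + 3*s^2 + 1) * hc4 + c^2 * hs4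
        + (c^3*s^3 + c^3*s + c^3 + 2*c^2*s^2 + 2*c^2*s + c^2 + 2*c*s^2 + c) * h2

lemma bcl_K_pow8 {c : F} (hK : c + c ^ 2 + c ^ 4 = 0) : c ^ 8 = c := by
  have h2 : (2 : F) = 0 := CharTwo.two_eq_zero
  linear_combination (c^4 - c^2 - c + 1) * hK + (c^3 - c) * h2

end

variable {F : Type*} [Field F] [Fintype F] [CharP F 2] {m : ℕ}

lemma bcl_tr_pow8 (hcard : Fintype.card F = 2 ^ (3 * m)) (x : F) :
    (relTrace8 m x) ^ 8 = relTrace8 m x := by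
  have hx : x ^ (8 ^ m : ℕ) = x := by
    have : (8 : ℕ) ^ m = 2 ^ (3 * m) := by rw [pow_mul]; norm_num
    rw [this, ← hcard, FiniteField.pow_card]
  have h1 : (relTrace8 m x) ^ 8 = ∑ j ∈ Finset.range m, x ^ (8 ^ (j + 1) : ℕ) := by
    unfold relTrace8
    rw [show (8 : ℕ) = 2 ^ 3 from rfl, sum_pow_char_pow]
    refine Finset.sum_congr rfl fun j _ => ?_
    rw [← pow_mul]
    congr 1
  have h2 : (∑ j ∈ Finset.range m, x ^ (8 ^ (j + 1) : ℕ)) + x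
      = relTrace8 m x + x ^ (8 ^ m : ℕ) := by
    have ha : ∑ j ∈ Finset.range (m + 1), x ^ (8 ^ j : ℕ)
        = (∑ j ∈ Finset.range m, x ^ (8 ^ (j + 1) : ℕ)) + x ^ (8 ^ 0 : ℕ) :=
      Finset.sum_range_succ' _ m
    have hb : ∑ j ∈ Finset.range (m + 1), x ^ (8 ^ j : ℕ)
        = relTrace8 m x + x ^ (8 ^ m : ℕ) := Finset.sum_range_succ _ m
    simpa using ha.symm.trans hb
  rw [hx] at h2
  rw [h1, add_right_cancel h2]

open Polynomial in
/-- `{c : c + c² + c⁴ = 0}` has exactly 4 elements. -/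
lemma bcl_card_K (hm : Odd m) (hcard : Fintype.card F = 2 ^ (3 * m)) :
    (Finset.univ.filter fun c : F => c + c ^ 2 + c ^ 4 = 0).card = 4 := by
  classical
  have h2 : (2 : F[X]) = 0 := CharTwo.two_eq_zero
  set q := Fintype.card F with hq
  have hm1 : 1 ≤ m := hm.pos
  have hq8 : 8 ≤ q := by
    rw [hcard]
    calc (8:ℕ) = 2 ^ 3 := rfl
    _ ≤ 2 ^ (3 * m) := Nat.pow_le_pow_right (by norm_num) (by omega)
  set p4 : F[X] := X ^ 4 + X ^ 2 + X with hp4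
  have hdeg4 : p4.natDegree = 4 := by unfold p4; compute_degree!
  have hp4ne : p4 ≠ 0 := fun h => by simp [h] at hdeg4
  have hdeg4' : (p4 + 1).natDegree = 4 := by unfold p4; compute_degree!
  have hp4ne' : p4 + 1 ≠ 0 := fun h => by simp [h] at hdeg4'
  have hfac : (X ^ 8 - X : F[X]) = p4 * (p4 + 1) := by
    unfold p4
    linear_combination (-(X^6 + X^5 + X^4 + X^3 + X^2 + X) : F[X]) * h2
  have h7 : (7 : ℕ) ∣ q - 1 := by
    have : (8:ℕ) - 1 ∣ 8 ^ m - 1 ^ m := Nat.sub_dvd_pow_sub_pow 8 1 m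
    simpa [hcard, pow_mul] using this
  have hdvd8 : (X ^ 8 - X : F[X]) ∣ X ^ q - X := by
    obtain ⟨k, hk⟩ := h7
    have h1 : (X ^ 7 - 1 : F[X]) ∣ (X ^ 7) ^ k - 1 ^ k := sub_dvd_pow_sub_pow _ _ k
    have h717 : ((X ^ 7 : F[X]) ^ k - 1 ^ k) = X ^ (q - 1) - 1 := by
      rw [← pow_mul, ← hk]; ring
    have hXq : (X ^ q - X : F[X]) = X * (X ^ (q - 1) - 1) := by
      rw [mul_sub, mul_one, ← pow_succ']
      congr 2
      omega
    have hX8 : (X ^ 8 - X : F[X]) = X * (X ^ 7 - 1) := by ring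
    rw [hXq, hX8]
    exact mul_dvd_mul_left _ (h717 ▸ h1)
  have hrootsq : (X ^ q - X : F[X]).roots = Finset.univ.val :=
    FiniteField.roots_X_pow_card_sub_X F
  have hXqne : (X ^ q - X : F[X]) ≠ 0 :=
    FiniteField.X_pow_card_sub_X_ne_zero F Fintype.one_lt_card
  have hdegq : (X ^ q - X : F[X]).natDegree = q :=
    FiniteField.X_pow_card_sub_X_natDegree_eq F Fintype.one_lt_card
  obtain ⟨h, hh⟩ := hdvd8
  have hhne : h ≠ 0 := by
    intro h0; rw [h0, mul_zero] at hh; exact hXqne hh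
  have hX8ne : (X ^ 8 - X : F[X]) ≠ 0 := by
    intro h0; rw [h0, zero_mul] at hh; exact hXqne hh
  have hdeg8 : (X ^ 8 - X : F[X]).natDegree = 8 := by compute_degree!
  have hdegh : h.natDegree = q - 8 := by
    have := Polynomial.natDegree_mul hX8ne hhne
    rw [← hh, hdegq, hdeg8] at this
    omega
  have hsplit : (X ^ q - X : F[X]).roots = (X ^ 8 - X : F[X]).roots + h.roots := by
    rw [hh]; exact Polynomial.roots_mul (hh ▸ hXqne)
  have hcard8 : Multiset.card (X ^ 8 - X : F[X]).roots = 8 := by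
    have hle : Multiset.card (X ^ 8 - X : F[X]).roots ≤ 8 :=
      le_trans (Polynomial.card_roots' _) (le_of_eq hdeg8)
    have hleh : Multiset.card h.roots ≤ q - 8 :=
      le_trans (Polynomial.card_roots' _) (le_of_eq hdegh)
    have hcq : Multiset.card (X ^ q - X : F[X]).roots = q := by
      rw [hrootsq]; simp [hq]
    rw [hsplit, Multiset.card_add] at hcq
    omega
  have hsplit4 : (X ^ 8 - X : F[X]).roots = p4.roots + (p4 + 1).roots := by
    rw [hfac]; exact Polynomial.roots_mul (hfac ▸ hX8ne)
  have hcard4 : Multiset.card p4.roots = 4 := by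
    have h1 : Multiset.card p4.roots ≤ 4 := le_trans (Polynomial.card_roots' _) (le_of_eq hdeg4)
    have h1' : Multiset.card (p4 + 1).roots ≤ 4 :=
      le_trans (Polynomial.card_roots' _) (le_of_eq hdeg4')
    rw [hsplit4, Multiset.card_add] at hcard8
    omega
  have hnodup : p4.roots.Nodup := by
    have hle : p4.roots ≤ (X ^ q - X : F[X]).roots :=
      Polynomial.roots.le_of_dvd hXqne (dvd_trans (Dvd.intro _ hfac.symm) ⟨h, hh⟩)
    exact Multiset.nodup_of_le hle (hrootsq ▸ Finset.univ.nodup)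
  have hset : (Finset.univ.filter fun c : F => c + c ^ 2 + c ^ 4 = 0) = p4.roots.toFinset := by
    ext c
    simp only [Finset.mem_filter, Finset.mem_univ, true_and, Multiset.mem_toFinset,
      Polynomial.mem_roots hp4ne, Polynomial.IsRoot.def]
    unfold p4
    simp only [Polynomial.eval_add, Polynomial.eval_pow, Polynomial.eval_X]
    constructor <;> intro hh' <;> linear_combination hh'
  rw [hset, Multiset.toFinset_card_of_nodup hnodup, hcard4]

lemma bcl_cube_inj (hm : Odd m) (hcard : Fintype.card F = 2 ^ (3 * m)) :
    Function.Injective (fun x : F => x ^ 3) := by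
  intro x y hxy
  simp only at hxy
  by_cases hy : y = 0
  · subst hy
    simpa [pow_eq_zero_iff] using hxy
  · have hz : (x * y⁻¹) ^ 3 = 1 := by
      field_simp
      exact hxy
    have hzne : x * y⁻¹ ≠ 0 := by
      intro h0
      rw [h0] at hz
      simp at hz
    have hmod : (2 : ℕ) ^ (3 * m) % 3 = 2 := by
      obtain ⟨k, hk⟩ := hm
      have h3m : 3 * m = 2 * (3 * k + 1) + 1 := by omega
      rw [h3m, pow_succ, pow_mul]
      have h4 : (2 : ℕ) ^ 2 = 4 := by norm_num
      rw [h4]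
      have : (4 : ℕ) ^ (3 * k + 1) % 3 = 1 := by
        have : (4 : ℕ) ^ (3 * k + 1) ≡ 1 ^ (3 * k + 1) [MOD 3] :=
          Nat.ModEq.pow _ (by decide)
        simpa [Nat.ModEq] using this
      omega
    have hq2 : 2 ≤ Fintype.card F := Fintype.one_lt_card
    have hcop : ¬ (3 : ℕ) ∣ (Fintype.card F - 1) := by
      rw [hcard]
      intro hdvd
      obtain ⟨t, ht⟩ := hdvd
      have h8 : 8 ≤ 2 ^ (3 * m) := by
        calc (8:ℕ) = 2 ^ 3 := rfl
        _ ≤ 2 ^ (3 * m) := Nat.pow_le_pow_right (by norm_num) (by omega)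
      omega
    have ho3 : orderOf (x * y⁻¹) ∣ 3 := orderOf_dvd_of_pow_eq_one hz
    have hoq : orderOf (x * y⁻¹) ∣ Fintype.card F - 1 :=
      orderOf_dvd_of_pow_eq_one (FiniteField.pow_card_sub_one_eq_one _ hzne)
    have h1 : orderOf (x * y⁻¹) = 1 := by
      rcases (Nat.prime_three).eq_one_or_self_of_dvd _ ho3 with h | h
      · exact h
      · exact absurd (h ▸ hoq) hcop
    have : x * y⁻¹ = 1 := orderOf_eq_one_iff.mp h1
    field_simp at this
    exact this

end BCLAux
section BCLMain

set_option linter.unusedSectionVars false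

variable {F : Type*} [Field F] [Fintype F] [CharP F 2] {m : ℕ}

lemma bcl_g_struct (hm : Odd m) (hcard : Fintype.card F = 2 ^ (3 * m)) :
    Mcount (fun u : F => u + (relTrace8 m (u ^ 3) + relTrace8 m (u ^ 3) ^ 2)) 1
        = 2 ^ (3 * m - 1) ∧
      Mcount (fun u : F => u + (relTrace8 m (u ^ 3) + relTrace8 m (u ^ 3) ^ 2)) 4
        = 2 ^ (3 * m - 3) ∧
      (Finset.image (fun u : F => u + (relTrace8 m (u ^ 3) + relTrace8 m (u ^ 3) ^ 2))
          Finset.univ).card = 5 * 2 ^ (3 * m - 3) := by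
  classical
  have h2 : (2 : F) = 0 := CharTwo.two_eq_zero
  have hm1 : 1 ≤ m := hm.pos
  set g : F → F := fun u => u + (relTrace8 m (u ^ 3) + relTrace8 m (u ^ 3) ^ 2) with hgdef
  have hgapp : ∀ w : F, g w = w + (relTrace8 m (w ^ 3) + relTrace8 m (w ^ 3) ^ 2) :=
    fun w => rfl
  have htr8 : ∀ x : F, (relTrace8 m x) ^ 8 = relTrace8 m x := bcl_tr_pow8 hcard
  have hτ8 : ∀ w : F, (relTrace8 m (w ^ 3) + relTrace8 m (w ^ 3) ^ 2) ^ 8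
      = relTrace8 m (w ^ 3) + relTrace8 m (w ^ 3) ^ 2 :=
    fun w => bcl_E8_add (htr8 _) (bcl_sq8 (htr8 _))
  -- the key fiber equation
  have hkey : ∀ u c : F, c ^ 8 = c →
      (g (u + c) = g u ↔
        c + (c^3 + c^2 * relTrace8 m u + c * (relTrace8 m u)^2)
          + (c^3 + c^2 * relTrace8 m u + c * (relTrace8 m u)^2)^2 = 0) := by
    intro u c hc8
    have hc2 : (c ^ 2) ^ 8 = c ^ 2 := bcl_sq8 hc8
    have hc3 : (c ^ 3) ^ 8 = c ^ 3 := bcl_cube8 hc8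
    have hexp : (u + c) ^ 3 = u ^ 3 + (c * u ^ 2 + (c ^ 2 * u + c ^ 3)) := by
      linear_combination (c^2*u + c*u^2) * h2
    have ht' : relTrace8 m ((u + c) ^ 3)
        = relTrace8 m (u ^ 3)
          + (c * (relTrace8 m u) ^ 2 + (c ^ 2 * relTrace8 m u + c ^ 3)) := by
      rw [hexp, bcl_tr_add, bcl_tr_add, bcl_tr_add, bcl_tr_smul hc8, bcl_tr_smul hc2,
        bcl_tr_const hm hc3, bcl_tr_sq]
    have hg' : g (u + c) = g u
        + (c + ((c^3 + c^2 * relTrace8 m u + c * (relTrace8 m u)^2)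
          + (c^3 + c^2 * relTrace8 m u + c * (relTrace8 m u)^2)^2)) := by
      rw [hgapp, hgapp, ht']
      linear_combination (relTrace8 m (u^3) * (c^3 + c^2 * relTrace8 m u
        + c * (relTrace8 m u)^2)) * h2
    rw [hg', add_eq_left]
    constructor <;> intro h <;> linear_combination h
  -- any two elements in the same fiber differ by an element of F₈
  have hmem : ∀ u v : F, g v = g u → ∃ c : F, c ^ 8 = c ∧ v = u + c := by
    intro u v hv
    refine ⟨v + u, ?_, by linear_combination (-u) * h2⟩
    have hv' : v + (relTrace8 m (v ^ 3) + relTrace8 m (v ^ 3) ^ 2)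
        = u + (relTrace8 m (u ^ 3) + relTrace8 m (u ^ 3) ^ 2) := by
      rw [← hgapp, ← hgapp]; exact hv
    have hcτ : v + u = (relTrace8 m (u ^ 3) + relTrace8 m (u ^ 3) ^ 2)
        + (relTrace8 m (v ^ 3) + relTrace8 m (v ^ 3) ^ 2) := by
      linear_combination hv' + (u - (relTrace8 m (v ^ 3) + relTrace8 m (v ^ 3) ^ 2)) * h2
    rw [hcτ]
    exact bcl_E8_add (hτ8 u) (hτ8 v)
  set K : Finset F := Finset.univ.filter fun c : F => c + c ^ 2 + c ^ 4 = 0 with hKdef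
  have hcardK : K.card = 4 := bcl_card_K hm hcard
  have hKmem : ∀ c : F, c ∈ K ↔ c + c ^ 2 + c ^ 4 = 0 := by
    intro c
    rw [hKdef, Finset.mem_filter]
    exact ⟨fun h => h.2, fun h => ⟨Finset.mem_univ c, h⟩⟩
  -- fibers over points with ψ = 0 are singletons
  have hfib0 : ∀ u : F,
      relTrace8 m u + (relTrace8 m u) ^ 2 + (relTrace8 m u) ^ 4 = 0 →
      Finset.univ.filter (fun v => g v = g u) = {u} := by
    intro u hψ0
    ext v
    simp only [Finset.mem_filter, Finset.mem_univ, true_and, Finset.mem_singleton]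
    constructor
    · intro hv
      obtain ⟨c, hc8, hvc⟩ := hmem u v hv
      rw [hvc] at hv
      have hD := (hkey u c hc8).mp hv
      rcases (bcl_f8 (htr8 u) hc8).mp hD with h0 | ⟨hLs, _⟩
      · rw [hvc, h0, add_zero]
      · exact absurd (hLs.symm.trans hψ0) one_ne_zero
    · rintro rfl; rfl
  -- fibers over points with ψ = 1 are cosets of K
  have hfib1 : ∀ u : F,
      relTrace8 m u + (relTrace8 m u) ^ 2 + (relTrace8 m u) ^ 4 = 1 →
      Finset.univ.filter (fun v => g v = g u) = K.image (fun c => u + c) := by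
    intro u hψ1
    ext v
    simp only [Finset.mem_filter, Finset.mem_univ, true_and, Finset.mem_image]
    constructor
    · intro hv
      obtain ⟨c, hc8, hvc⟩ := hmem u v hv
      rw [hvc] at hv
      have hD := (hkey u c hc8).mp hv
      rcases (bcl_f8 (htr8 u) hc8).mp hD with h0 | ⟨_, hLc⟩
      · exact ⟨c, (hKmem c).mpr (by rw [h0]; ring), hvc.symm⟩
      · exact ⟨c, (hKmem c).mpr hLc, hvc.symm⟩
    · rintro ⟨c, hcK, rfl⟩
      have hLc := (hKmem c).mp hcK
      have hc8 := bcl_K_pow8 hLc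
      exact (hkey u c hc8).mpr ((bcl_f8 (htr8 u) hc8).mpr (Or.inr ⟨hψ1, hLc⟩))
  -- preimage counts
  have hpre0 : ∀ u : F,
      relTrace8 m u + (relTrace8 m u) ^ 2 + (relTrace8 m u) ^ 4 = 0 →
      preCard g (g u) = 1 := by
    intro u h
    unfold preCard
    rw [hfib0 u h, Finset.card_singleton]
  have hpre1 : ∀ u : F,
      relTrace8 m u + (relTrace8 m u) ^ 2 + (relTrace8 m u) ^ 4 = 1 →
      preCard g (g u) = 4 := by
    intro u h
    unfold preCard
    rw [hfib1 u h, Finset.card_image_of_injective _ (add_right_injective u), hcardK]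
  -- the sets A and B
  set A : Finset F := Finset.univ.filter
    (fun u : F => relTrace8 m u + (relTrace8 m u) ^ 2 + (relTrace8 m u) ^ 4 = 0) with hAdef
  set B : Finset F := Finset.univ.filter
    (fun u : F => relTrace8 m u + (relTrace8 m u) ^ 2 + (relTrace8 m u) ^ 4 = 1) with hBdef
  have hAmem : ∀ u : F, u ∈ A ↔
      relTrace8 m u + (relTrace8 m u) ^ 2 + (relTrace8 m u) ^ 4 = 0 := by
    intro u
    rw [hAdef, Finset.mem_filter]
    exact ⟨fun h => h.2, fun h => ⟨Finset.mem_univ u, h⟩⟩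
  have hBmem : ∀ u : F, u ∈ B ↔
      relTrace8 m u + (relTrace8 m u) ^ 2 + (relTrace8 m u) ^ 4 = 1 := by
    intro u
    rw [hBdef, Finset.mem_filter]
    exact ⟨fun h => h.2, fun h => ⟨Finset.mem_univ u, h⟩⟩
  have hψadd : ∀ u v : F,
      relTrace8 m (u + v) + (relTrace8 m (u + v)) ^ 2 + (relTrace8 m (u + v)) ^ 4
        = (relTrace8 m u + (relTrace8 m u) ^ 2 + (relTrace8 m u) ^ 4)
          + (relTrace8 m v + (relTrace8 m v) ^ 2 + (relTrace8 m v) ^ 4) := by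
    intro u v
    rw [bcl_tr_add]
    linear_combination ((relTrace8 m u) * (relTrace8 m v)
      + 2 * (relTrace8 m u)^3 * (relTrace8 m v)
      + 3 * (relTrace8 m u)^2 * (relTrace8 m v)^2
      + 2 * (relTrace8 m u) * (relTrace8 m v)^3) * h2
  have hψ1' : relTrace8 m (1 : F) + (relTrace8 m (1 : F)) ^ 2 + (relTrace8 m (1 : F)) ^ 4
      = 1 := by
    rw [bcl_tr_const hm (one_pow 8)]
    linear_combination h2
  have hABcard : A.card = B.card := by
    apply Finset.card_nbij' (i := fun u => u + 1) (j := fun v => v + 1)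
    · intro u hu
      have hu0 := (hAmem u).mp hu
      refine (hBmem _).mpr ?_
      rw [hψadd u 1, hu0, hψ1', zero_add]
    · intro v hv
      have hv1 := (hBmem v).mp hv
      refine (hAmem _).mpr ?_
      rw [hψadd v 1, hv1, hψ1']
      linear_combination h2
    · intro u _; linear_combination h2
    · intro v _; linear_combination h2
  have hABall : A.card + B.card = 2 ^ (3 * m) := by
    have hBneg : B = Finset.univ.filter
        (fun u : F => ¬ (relTrace8 m u + (relTrace8 m u) ^ 2 + (relTrace8 m u) ^ 4 = 0)) := by
      rw [hBdef]
      apply Finset.filter_congr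
      intro u _
      rcases bcl_L01 (htr8 u) with h | h
      · simp [h]
      · simp [h]
    rw [hBneg, hAdef, Finset.card_filter_add_card_filter_not, Finset.card_univ, hcard]
  have hpow1 : (2:ℕ) ^ (3 * m) = 2 ^ (3 * m - 1) * 2 := by
    rw [← pow_succ]; congr 1; omega
  have hAcard : A.card = 2 ^ (3 * m - 1) := by omega
  have hBcard : B.card = 2 ^ (3 * m - 1) := by omega
  -- M₁
  have himg1 : Finset.univ.filter (fun y => preCard g y = 1) = A.image g := by
    ext y
    simp only [Finset.mem_filter, Finset.mem_univ, true_and, Finset.mem_image]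
    constructor
    · intro hy
      have hy' : (Finset.univ.filter fun x => g x = y).card = 1 := hy
      obtain ⟨x, hx⟩ := Finset.card_eq_one.mp hy'
      have hxmem : x ∈ Finset.univ.filter fun x => g x = y := by
        rw [hx]; exact Finset.mem_singleton_self x
      have hgx : g x = y := (Finset.mem_filter.mp hxmem).2
      have hψx : relTrace8 m x + (relTrace8 m x) ^ 2 + (relTrace8 m x) ^ 4 = 0 := by
        rcases bcl_L01 (htr8 x) with h | h
        · exact h
        · exfalso
          have h4 := hpre1 x h
          rw [hgx] at h4
          rw [hy] at h4
          norm_num at h4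
      exact ⟨x, (hAmem x).mpr hψx, hgx⟩
    · rintro ⟨u, hu, rfl⟩
      exact hpre0 u ((hAmem u).mp hu)
  have hinjA : Set.InjOn g ↑A := by
    intro u hu u' hu' hg
    have h0 := (hAmem u').mp (by exact_mod_cast hu')
    have : u ∈ Finset.univ.filter (fun v => g v = g u') :=
      Finset.mem_filter.mpr ⟨Finset.mem_univ u, hg⟩
    rw [hfib0 u' h0] at this
    exact Finset.mem_singleton.mp this
  have hM1 : Mcount g 1 = 2 ^ (3 * m - 1) := by
    unfold Mcount
    rw [himg1, Finset.card_image_of_injOn hinjA, hAcard]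
  -- M₄
  have himg4 : Finset.univ.filter (fun y => preCard g y = 4) = B.image g := by
    ext y
    simp only [Finset.mem_filter, Finset.mem_univ, true_and, Finset.mem_image]
    constructor
    · intro hy
      have hy' : (Finset.univ.filter fun x => g x = y).card = 4 := hy
      have hpos : 0 < (Finset.univ.filter fun x => g x = y).card := by omega
      obtain ⟨x, hxmem⟩ := Finset.card_pos.mp hpos
      have hgx : g x = y := (Finset.mem_filter.mp hxmem).2
      have hψx : relTrace8 m x + (relTrace8 m x) ^ 2 + (relTrace8 m x) ^ 4 = 1 := by
        rcases bcl_L01 (htr8 x) with h | h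
        · exfalso
          have h1 := hpre0 x h
          rw [hgx] at h1
          rw [hy] at h1
          norm_num at h1
        · exact h
      exact ⟨x, (hBmem x).mpr hψx, hgx⟩
    · rintro ⟨u, hu, rfl⟩
      exact hpre1 u ((hBmem u).mp hu)
  have hfibB : ∀ y ∈ B.image g, (B.filter fun x => g x = y).card = 4 := by
    intro y hy
    obtain ⟨u, hu, hguy⟩ := Finset.mem_image.mp hy
    have hψu := (hBmem u).mp hu
    have hBfil : (B.filter fun x => g x = y) = Finset.univ.filter (fun v => g v = g u) := by
      ext v
      simp only [Finset.mem_filter, Finset.mem_univ, true_and]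
      constructor
      · rintro ⟨_, hgv⟩
        rw [hgv, ← hguy]
      · intro hgv
        have hψv : relTrace8 m v + (relTrace8 m v) ^ 2 + (relTrace8 m v) ^ 4 = 1 := by
          rcases bcl_L01 (htr8 v) with h | h
          · exfalso
            have : u ∈ Finset.univ.filter (fun w => g w = g v) :=
              Finset.mem_filter.mpr ⟨Finset.mem_univ u, hgv.symm⟩
            rw [hfib0 v h] at this
            have huv := Finset.mem_singleton.mp this
            rw [huv] at hψu
            rw [hψu] at h
            exact one_ne_zero h
          · exact h
        exact ⟨(hBmem v).mpr hψv, by rw [hgv, hguy]⟩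
    rw [hBfil, hfib1 u hψu, Finset.card_image_of_injective _ (add_right_injective u), hcardK]
  have hBsum : B.card = (B.image g).card * 4 := by
    rw [Finset.card_eq_sum_card_fiberwise (fun x hx => Finset.mem_image_of_mem g hx)]
    rw [Finset.sum_congr rfl hfibB, Finset.sum_const, smul_eq_mul]
  have hpow2 : (2:ℕ) ^ (3 * m - 1) = 2 ^ (3 * m - 3) * 4 := by
    rw [show 3 * m - 1 = (3 * m - 3) + 2 by omega, pow_add]
    norm_num
  have hM4 : Mcount g 4 = 2 ^ (3 * m - 3) := by
    unfold Mcount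
    rw [himg4]
    omega
  -- image size
  have hABuniv : (Finset.univ : Finset F) = A ∪ B := by
    ext u
    simp only [Finset.mem_univ, true_iff, Finset.mem_union]
    rcases bcl_L01 (htr8 u) with h | h
    · exact Or.inl ((hAmem u).mpr h)
    · exact Or.inr ((hBmem u).mpr h)
  have hdisj : Disjoint (A.image g) (B.image g) := by
    rw [Finset.disjoint_left]
    intro y hyA hyB
    have h1 : preCard g y = 1 := by
      have hmem1 : y ∈ Finset.univ.filter (fun y => preCard g y = 1) := by
        rw [himg1]; exact hyA
      exact (Finset.mem_filter.mp hmem1).2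
    have h4 : preCard g y = 4 := by
      have hmem4 : y ∈ Finset.univ.filter (fun y => preCard g y = 4) := by
        rw [himg4]; exact hyB
      exact (Finset.mem_filter.mp hmem4).2
    omega
  have himgcard : (Finset.image g Finset.univ).card = 5 * 2 ^ (3 * m - 3) := by
    rw [hABuniv, Finset.image_union, Finset.card_union_of_disjoint hdisj,
      Finset.card_image_of_injOn hinjA, hAcard]
    omega
  exact ⟨hM1, hM4, himgcard⟩

end BCLMain
/-- for odd `m` and nonzero `a`, the APN map
`f(x) = x³ + a⁻¹ Tr_{2^{3m}/2³}(a³x⁹ + a⁶x¹⁸)` on `F_{2^{3m}}` satisfies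
`M₁(f) = 2^{3m−1}`, `M₄(f) = 2^{3m−3}` and `|Image f| = 5·2^{3m−3}`. -/
theorem budaghyan_map_image {F : Type*} [Field F] [Fintype F] [CharP F 2] {m : ℕ}
    (hm : Odd m) (hcard : Fintype.card F = 2 ^ (3 * m)) {a : F} (ha : a ≠ 0)
    (f : F → F)
    (hfdef : ∀ x, f x = x ^ 3 + a⁻¹ * relTrace8 m (a ^ 3 * x ^ 9 + a ^ 6 * x ^ 18)) :
    Mcount f 1 = 2 ^ (3 * m - 1) ∧ Mcount f 4 = 2 ^ (3 * m - 3) ∧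
      (Finset.image f Finset.univ).card = 5 * 2 ^ (3 * m - 3) := by
  classical
  obtain ⟨hM1, hM4, himg⟩ := bcl_g_struct (F := F) hm hcard
  set g : F → F := fun u => u + (relTrace8 m (u ^ 3) + relTrace8 m (u ^ 3) ^ 2) with hgdef
  -- f x = a⁻¹ * g (a * x³)
  have hfg : ∀ x : F, f x = a⁻¹ * g (a * x ^ 3) := by
    intro x
    rw [hfdef]
    have h1 : a ^ 3 * x ^ 9 + a ^ 6 * x ^ 18 = ((a * x ^ 3) ^ 3) + (((a * x ^ 3) ^ 3) ^ 2) := by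
      ring
    rw [h1, bcl_tr_add, bcl_tr_sq, hgdef]
    field_simp
  have hσinj : Function.Injective (fun x : F => a * x ^ 3) := by
    intro x y hxy
    simp only at hxy
    exact bcl_cube_inj hm hcard (mul_left_cancel₀ ha hxy)
  have hσsurj : Function.Surjective (fun x : F => a * x ^ 3) :=
    Finite.surjective_of_injective hσinj
  -- preimage counts transport
  have hpre : ∀ y : F, preCard f y = preCard g (a * y) := by
    intro y
    unfold preCard
    have hfilter : (Finset.univ.filter fun x => f x = y)
        = Finset.univ.filter fun x => g (a * x ^ 3) = a * y := by
      apply Finset.filter_congr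
      intro x _
      rw [hfg x]
      constructor
      · intro h; rw [← h]; field_simp
      · intro h; rw [h]; field_simp
    rw [hfilter]
    apply Finset.card_nbij (i := fun x => a * x ^ 3)
    · intro x hx
      exact Finset.mem_filter.mpr ⟨Finset.mem_univ _, (Finset.mem_filter.mp hx).2⟩
    · exact hσinj.injOn
    · intro z hz
      obtain ⟨x, hx⟩ := hσsurj z
      simp only [Finset.coe_filter, Set.mem_setOf_eq] at hz
      have hx' : a * x ^ 3 = z := hx
      refine ⟨x, ?_, hx⟩
      simp only [Finset.coe_filter, Set.mem_setOf_eq, Finset.mem_univ, true_and]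
      rw [hx']
      exact hz.2
  -- Mcount transport
  have hM : ∀ r : ℕ, Mcount f r = Mcount g r := by
    intro r
    unfold Mcount
    have hfilter : (Finset.univ.filter fun y => preCard f y = r)
        = Finset.univ.filter fun y => preCard g (a * y) = r := by
      apply Finset.filter_congr
      intro y _
      rw [hpre y]
    rw [hfilter]
    apply Finset.card_nbij (i := fun y => a * y)
    · intro y hy
      exact Finset.mem_filter.mpr ⟨Finset.mem_univ _, (Finset.mem_filter.mp hy).2⟩
    · exact (mul_right_injective₀ ha).injOn
    · intro z hz
      simp only [Finset.coe_filter, Set.mem_setOf_eq] at hz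
      refine ⟨a⁻¹ * z, ?_, by field_simp⟩
      simp only [Finset.coe_filter, Set.mem_setOf_eq, Finset.mem_univ, true_and]
      have : a * (a⁻¹ * z) = z := by field_simp
      rw [this]
      exact hz.2
  -- image transport
  have himgf : (Finset.image f Finset.univ).card = (Finset.image g Finset.univ).card := by
    have h1 : Finset.image f Finset.univ
        = Finset.image (fun w => a⁻¹ * w) (Finset.image (fun x => g (a * x ^ 3)) Finset.univ) := by
      rw [Finset.image_image]
      exact Finset.image_congr fun x _ => hfg x
    have h2 : Finset.image (fun x => g (a * x ^ 3)) Finset.univ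
        = Finset.image g (Finset.image (fun x => a * x ^ 3) Finset.univ) := by
      rw [Finset.image_image]
      rfl
    have h3 : Finset.image (fun x : F => a * x ^ 3) Finset.univ = Finset.univ := by
      apply Finset.eq_univ_of_forall
      intro z
      obtain ⟨x, hx⟩ := hσsurj z
      exact Finset.mem_image.mpr ⟨x, Finset.mem_univ x, hx⟩
    rw [h1, h2, h3, Finset.card_image_of_injective _ (mul_right_injective₀ (inv_ne_zero ha))]
  exact ⟨(hM 1).trans hM1, (hM 4).trans hM4, himgf.trans himg⟩
end

section
/- Let n be odd and f : F_{2^n} → F_{2^n} be almost bent. With N₀, N₊, N₋ the numbers of nonzero b with W_f(b,0) equal to 0, 2^{(n+1)/2}, −2^{(n+1)/2} respectively, one has N₀ = 2^n − 1 + 2^{n−1} − N(f)/2, N₊ = N(f)/4 − 2^{n−2} + 2^{(n−3)/2}(ω(0)−1), and N₋ = N(f)/4 − 2^{n−2} − 2^{(n−3)/2}(ω(0)−1). -/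
open Finset
open scoped Classical

/-- The Walsh transform `W_f(b,a) = Σ_x (−1)^{Tr(b f(x) + a x)}` of a map on a binary
field, where `Tr` is the absolute trace to `F_2`. -/
noncomputable def Walsh {F : Type*} [Field F] [Fintype F] [CharP F 2] (f : F → F)
    (b a : F) : ℤ :=
  letI := ZMod.algebra F 2
  ∑ x : F, if Algebra.trace (ZMod 2) F (b * f x + a * x) = 0 then 1 else -1

/-- for an almost bent map `f` on `F_{2^n}`, `n` odd, the numbers
`N₀, N₊, N₋` of nonzero `b` with `W_f(b,0)` equal to `0`, `2^{(n+1)/2}`, `−2^{(n+1)/2}`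
are determined by `N(f)` and `ω(0)`. -/
theorem almost_bent_walsh_counts {F : Type*} [Field F] [Fintype F] [CharP F 2]
    {n : ℕ} (hn : Odd n) (hcard : Fintype.card F = 2 ^ n) {f : F → F}
    (hab : ∀ b a : F, b ≠ 0 →
      Walsh f b a = 0 ∨ Walsh f b a = 2 ^ ((n + 1) / 2) ∨
        Walsh f b a = -(2 ^ ((n + 1) / 2))) :
    ((Finset.univ.filter fun b : F => b ≠ 0 ∧ Walsh f b 0 = 0).card : ℚ)
        = 2 ^ n - 1 + (2 : ℚ) ^ ((n : ℤ) - 1) - (NN f : ℚ) / 2 ∧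
    ((Finset.univ.filter fun b : F =>
          b ≠ 0 ∧ Walsh f b 0 = 2 ^ ((n + 1) / 2)).card : ℚ)
        = (NN f : ℚ) / 4 - (2 : ℚ) ^ ((n : ℤ) - 2)
            + (2 : ℚ) ^ (((n : ℤ) - 3) / 2) * ((preCard f 0 : ℚ) - 1) ∧
    ((Finset.univ.filter fun b : F =>
          b ≠ 0 ∧ Walsh f b 0 = -(2 ^ ((n + 1) / 2))).card : ℚ)
        = (NN f : ℚ) / 4 - (2 : ℚ) ^ ((n : ℤ) - 2)
            - (2 : ℚ) ^ (((n : ℤ) - 3) / 2) * ((preCard f 0 : ℚ) - 1) := by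
  letI := ZMod.algebra F 2
  haveI : FiniteDimensional (ZMod 2) F := Module.Finite.of_finite
  -- the key character sum
  have key : ∀ c : F,
      (∑ b : F, if Algebra.trace (ZMod 2) F (b * c) = 0 then (1 : ℤ) else -1)
        = if c = 0 then (Fintype.card F : ℤ) else 0 := by
    intro c
    by_cases hc : c = 0
    · simp [hc, Finset.card_univ]
    · rw [if_neg hc]
      obtain ⟨t, ht⟩ := Algebra.trace_surjective (ZMod 2) F 1
      have hb0c : Algebra.trace (ZMod 2) F ((t * c⁻¹) * c) = 1 := by
        rw [mul_assoc, inv_mul_cancel₀ hc, mul_one]; exact ht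
      have hflip : ∀ u : ZMod 2,
          (if u + 1 = 0 then (1 : ℤ) else -1) = -(if u = 0 then (1 : ℤ) else -1) := by
        decide
      have hre :
          (∑ b : F, if Algebra.trace (ZMod 2) F ((b + t * c⁻¹) * c) = 0 then (1:ℤ) else -1)
            = ∑ b : F, if Algebra.trace (ZMod 2) F (b * c) = 0 then (1:ℤ) else -1 :=
        Fintype.sum_equiv (Equiv.addRight (t * c⁻¹)) _ _ (fun b => rfl)
      have hterm : ∀ b : F,
          (if Algebra.trace (ZMod 2) F ((b + t * c⁻¹) * c) = 0 then (1:ℤ) else -1)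
            = -(if Algebra.trace (ZMod 2) F (b * c) = 0 then (1:ℤ) else -1) := by
        intro b
        rw [add_mul, map_add, hb0c]
        exact hflip _
      rw [Finset.sum_congr rfl (fun b _ => hterm b), Finset.sum_neg_distrib] at hre
      linarith
  -- unfolded form of `Walsh f b 0`
  have Wb : ∀ b : F, Walsh f b 0
      = ∑ x : F, if Algebra.trace (ZMod 2) F (b * f x) = 0 then (1 : ℤ) else -1 := by
    intro b
    simp [Walsh]
  have W0 : Walsh f 0 0 = (Fintype.card F : ℤ) := by
    rw [Wb 0]
    simp [Finset.card_univ]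
  -- first moment
  have hsum1 : ∑ b : F, Walsh f b 0 = (Fintype.card F : ℤ) * (preCard f 0 : ℤ) := by
    calc ∑ b : F, Walsh f b 0
        = ∑ b : F, ∑ x : F,
            (if Algebra.trace (ZMod 2) F (b * f x) = 0 then (1:ℤ) else -1) :=
          Finset.sum_congr rfl (fun b _ => Wb b)
      _ = ∑ x : F, ∑ b : F,
            (if Algebra.trace (ZMod 2) F (b * f x) = 0 then (1:ℤ) else -1) :=
          Finset.sum_comm
      _ = ∑ x : F, (if f x = 0 then (Fintype.card F : ℤ) else 0) :=
          Finset.sum_congr rfl (fun x _ => key (f x))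
      _ = (Fintype.card F : ℤ) * (preCard f 0 : ℤ) := by
          rw [← Finset.sum_filter, Finset.sum_const, nsmul_eq_mul]
          rw [preCard]
          ring
  -- second moment
  have hadd0 : ∀ a b : F, a + b = 0 ↔ a = b := by
    intro a b
    rw [CharTwo.add_eq_iff_eq_add, zero_add]
  have hprodite : ∀ u v : ZMod 2,
      (if u = 0 then (1:ℤ) else -1) * (if v = 0 then (1:ℤ) else -1)
        = if u + v = 0 then (1:ℤ) else -1 := by decide
  have Wb2 : ∀ b : F, (Walsh f b 0) ^ 2
      = ∑ p : F × F,
          (if Algebra.trace (ZMod 2) F (b * (f p.1 + f p.2)) = 0 then (1:ℤ) else -1) := by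
    intro b
    have h1 : (∑ p : F × F,
          (if Algebra.trace (ZMod 2) F (b * (f p.1 + f p.2)) = 0 then (1:ℤ) else -1))
        = ∑ x : F, ∑ y : F,
          (if Algebra.trace (ZMod 2) F (b * (f x + f y)) = 0 then (1:ℤ) else -1) :=
      Fintype.sum_prod_type _
    rw [Wb b, sq, Fintype.sum_mul_sum, h1]
    refine Finset.sum_congr rfl fun x _ => Finset.sum_congr rfl fun y _ => ?_
    rw [hprodite, ← map_add, ← mul_add]
  have hsum2 : ∑ b : F, (Walsh f b 0) ^ 2
      = (Fintype.card F : ℤ) * (NN f : ℤ) := by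
    calc ∑ b : F, (Walsh f b 0) ^ 2
        = ∑ b : F, ∑ p : F × F,
            (if Algebra.trace (ZMod 2) F (b * (f p.1 + f p.2)) = 0 then (1:ℤ) else -1) :=
          Finset.sum_congr rfl (fun b _ => Wb2 b)
      _ = ∑ p : F × F, ∑ b : F,
            (if Algebra.trace (ZMod 2) F (b * (f p.1 + f p.2)) = 0 then (1:ℤ) else -1) :=
          Finset.sum_comm
      _ = ∑ p : F × F, (if f p.1 + f p.2 = 0 then (Fintype.card F : ℤ) else 0) :=
          Finset.sum_congr rfl (fun p _ => key _)
      _ = ∑ p : F × F, (if f p.1 = f p.2 then (Fintype.card F : ℤ) else 0) := by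
          refine Finset.sum_congr rfl (fun p _ => ?_)
          simp_rw [hadd0]
      _ = (Fintype.card F : ℤ) * (NN f : ℤ) := by
          rw [← Finset.sum_filter, Finset.sum_const, nsmul_eq_mul]
          rw [NN]
          ring
  -- set up the counting
  set c : ℤ := 2 ^ ((n + 1) / 2) with hc
  have hcpos : 0 < c := by positivity
  have hc0 : c ≠ 0 := hcpos.ne'
  have h0c : (0:ℤ) ≠ c := hcpos.ne
  have hcmc : c ≠ -c := by intro h; linarith
  have hmcc : -c ≠ c := fun h => hcmc h.symm
  have hmc0 : -c ≠ 0 := by simpa using hc0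
  have h0mc : (0:ℤ) ≠ -c := hmc0.symm
  set s : Finset F := Finset.univ.filter (fun b : F => b ≠ 0) with hs
  have hserase : s = Finset.univ.erase 0 := Finset.filter_ne' _ _
  have htri : ∀ b ∈ s, Walsh f b 0 = 0 ∨ Walsh f b 0 = c ∨ Walsh f b 0 = -c := by
    intro b hb
    rw [hs, Finset.mem_filter] at hb
    exact hab b 0 hb.2
  -- names for the three counts
  set A : ℕ := (Finset.univ.filter fun b : F => b ≠ 0 ∧ Walsh f b 0 = 0).card with hA
  set B : ℕ := (Finset.univ.filter fun b : F => b ≠ 0 ∧ Walsh f b 0 = c).card with hB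
  set C : ℕ := (Finset.univ.filter fun b : F => b ≠ 0 ∧ Walsh f b 0 = -c).card with hC
  have sA : (∑ b ∈ s, if Walsh f b 0 = 0 then (1:ℤ) else 0) = (A : ℤ) := by
    rw [Finset.sum_boole, hs, Finset.filter_filter, hA]
  have sB : (∑ b ∈ s, if Walsh f b 0 = c then (1:ℤ) else 0) = (B : ℤ) := by
    rw [Finset.sum_boole, hs, Finset.filter_filter, hB]
  have sC : (∑ b ∈ s, if Walsh f b 0 = -c then (1:ℤ) else 0) = (C : ℤ) := by
    rw [Finset.sum_boole, hs, Finset.filter_filter, hC]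
  have hcardpos : 1 ≤ Fintype.card F := Fintype.card_pos
  have hscard : (s.card : ℤ) = (Fintype.card F : ℤ) - 1 := by
    rw [hserase, Finset.card_erase_of_mem (Finset.mem_univ 0), Finset.card_univ]
    push_cast [Nat.cast_sub hcardpos]
    ring
  -- equation E0
  have E0 : (A : ℤ) + B + C = (Fintype.card F : ℤ) - 1 := by
    have h1 : ∀ b ∈ s, (1:ℤ)
        = (if Walsh f b 0 = 0 then (1:ℤ) else 0) + (if Walsh f b 0 = c then (1:ℤ) else 0)
          + (if Walsh f b 0 = -c then (1:ℤ) else 0) := by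
      intro b hb
      rcases htri b hb with h | h | h <;> rw [h] <;>
        simp [h0c, h0mc, hc0, hcmc, hmcc, hmc0]
    have := Finset.sum_congr rfl h1
    rw [Finset.sum_const, Finset.sum_add_distrib, Finset.sum_add_distrib,
      sA, sB, sC, nsmul_eq_mul, mul_one] at this
    rw [← this]
    exact hscard
  -- equation E1
  have E1 : c * (B : ℤ) - c * (C : ℤ)
      = (Fintype.card F : ℤ) * (preCard f 0 : ℤ) - (Fintype.card F : ℤ) := by
    have h2 : ∀ b ∈ s, Walsh f b 0
        = c * (if Walsh f b 0 = c then (1:ℤ) else 0)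
          - c * (if Walsh f b 0 = -c then (1:ℤ) else 0) := by
      intro b hb
      rcases htri b hb with h | h | h <;> rw [h] <;>
        simp [h0c, h0mc, hc0, hcmc, hmcc, hmc0]
    have hsplit : ∑ b ∈ s, Walsh f b 0
        = c * (B : ℤ) - c * (C : ℤ) := by
      rw [Finset.sum_congr rfl h2, Finset.sum_sub_distrib, ← Finset.mul_sum,
        ← Finset.mul_sum, sB, sC]
    have hval : ∑ b ∈ s, Walsh f b 0
        = (Fintype.card F : ℤ) * (preCard f 0 : ℤ) - (Fintype.card F : ℤ) := by
      have h := Finset.add_sum_erase Finset.univ (fun b => Walsh f b 0) (Finset.mem_univ 0)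
      beta_reduce at h
      rw [← hserase, hsum1, W0] at h
      linarith
    rw [← hsplit, hval]
  -- equation E2
  have E2 : c ^ 2 * ((B : ℤ) + (C : ℤ))
      = (Fintype.card F : ℤ) * (NN f : ℤ) - (Fintype.card F : ℤ) ^ 2 := by
    have h3 : ∀ b ∈ s, (Walsh f b 0) ^ 2
        = c ^ 2 * ((if Walsh f b 0 = c then (1:ℤ) else 0)
          + (if Walsh f b 0 = -c then (1:ℤ) else 0)) := by
      intro b hb
      rcases htri b hb with h | h | h <;> rw [h] <;>
        simp [h0c, h0mc, hc0, hcmc, hmcc, hmc0, neg_sq]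
    have hsplit : ∑ b ∈ s, (Walsh f b 0) ^ 2 = c ^ 2 * ((B : ℤ) + (C : ℤ)) := by
      rw [Finset.sum_congr rfl h3, ← Finset.mul_sum, Finset.sum_add_distrib, sB, sC]
    have hval : ∑ b ∈ s, (Walsh f b 0) ^ 2
        = (Fintype.card F : ℤ) * (NN f : ℤ) - (Fintype.card F : ℤ) ^ 2 := by
      have h := Finset.add_sum_erase Finset.univ (fun b => (Walsh f b 0) ^ 2)
        (Finset.mem_univ 0)
      beta_reduce at h
      rw [← hserase, hsum2, W0] at h
      linarith
    rw [← hsplit, hval]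
  -- pass to ℚ
  obtain ⟨k, hk⟩ := hn
  have hcZ : (Fintype.card F : ℤ) = 2 ^ n := by exact_mod_cast hcard
  rw [hcZ] at E0 E1 E2
  rw [hc] at E1 E2
  have e0 : (A : ℚ) + B + C = 2 ^ n - 1 := by exact_mod_cast E0
  have e1 : (2:ℚ) ^ ((n + 1) / 2) * B - (2:ℚ) ^ ((n + 1) / 2) * C
      = 2 ^ n * (preCard f 0 : ℚ) - 2 ^ n := by exact_mod_cast E1
  have e2 : ((2:ℚ) ^ ((n + 1) / 2)) ^ 2 * ((B : ℚ) + C)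
      = 2 ^ n * (NN f : ℚ) - (2 ^ n : ℚ) ^ 2 := by exact_mod_cast E2
  set T : ℚ := (2:ℚ) ^ ((n + 1) / 2) with hT
  set P : ℚ := (2:ℚ) ^ n with hP
  have hT2 : T ^ 2 = 2 * P := by
    have hm2 : (n + 1) / 2 * 2 = n + 1 := by omega
    rw [hT, ← pow_mul, hm2, pow_succ, hP]
    ring
  have hP0 : P ≠ 0 := by rw [hP]; positivity
  have hT0 : T ≠ 0 := by rw [hT]; positivity
  have hq2 : (2:ℚ) ≠ 0 := by norm_num
  have hz1 : (2:ℚ) ^ ((n : ℤ) - 1) = P / 2 := by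
    rw [zpow_sub₀ hq2, zpow_natCast, zpow_one, hP]
  have hz2 : (2:ℚ) ^ ((n : ℤ) - 2) = P / 4 := by
    rw [zpow_sub₀ hq2, zpow_natCast, hP]
    norm_num
  have hz3 : (2:ℚ) ^ (((n : ℤ) - 3) / 2) = T / 4 := by
    have hi : ((n : ℤ) - 3) / 2 = ((n + 1) / 2 : ℕ) - 2 := by omega
    rw [hi, zpow_sub₀ hq2, zpow_natCast, hT]
    norm_num
  have hBC : (B : ℚ) + C = (NN f : ℚ) / 2 - P / 2 := by
    have hcan : P * (2 * ((B : ℚ) + C)) = P * ((NN f : ℚ) - P) := by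
      linear_combination e2 - ((B : ℚ) + C) * hT2
    have := mul_left_cancel₀ hP0 hcan
    linarith
  have hBmC : (B : ℚ) - C = T / 2 * ((preCard f 0 : ℚ) - 1) := by
    have hcan : T * ((B : ℚ) - C) = T * (T / 2 * ((preCard f 0 : ℚ) - 1)) := by
      linear_combination e1 - ((preCard f 0 : ℚ) - 1) / 2 * hT2
    have := mul_left_cancel₀ hT0 hcan
    linarith
  refine ⟨?_, ?_, ?_⟩
  · rw [hz1]
    linarith [e0, hBC]
  · rw [hz2, hz3]
    linarith [hBC, hBmC]
  · rw [hz2, hz3]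
    linarith [hBC, hBmC]
end

section
/- Let f : F_{2^n} → F_{2^n} be an almost bent map and let k = max over a ∈ F_{2^n} of the number of preimages ω(a). Then |Image(f)| ≤ 2^n − ((k−1)/k)·2^{(n+1)/2}. In particular, if f is not a permutation then |Image(f)| ≤ 2^n − 2^{(n−1)/2}. -/
open Finset
open scoped Classical

/-- The character `c ↦ (−1)^{Tr c}`. -/
noncomputable def chi (F : Type*) [Field F] [Fintype F] [CharP F 2] (c : F) : ℤ :=
  letI := ZMod.algebra F 2
  if Algebra.trace (ZMod 2) F c = 0 then 1 else -1

section aux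
variable {F : Type*} [Field F] [Fintype F] [CharP F 2]

lemma chi_zero : chi F 0 = 1 := by
  letI := ZMod.algebra F 2
  simp [chi]

lemma chi_abs (c : F) : chi F c = 1 ∨ chi F c = -1 := by
  unfold chi; split <;> simp

lemma chi_add (c d : F) : chi F (c + d) = chi F c * chi F d := by
  letI := ZMod.algebra F 2
  have h2 : ∀ z : ZMod 2, z = 0 ∨ z = 1 := by decide
  have h11 : (1 : ZMod 2) + 1 = 0 := by decide
  simp only [chi, map_add]
  rcases h2 (Algebra.trace (ZMod 2) F c) with h1 | h1 <;>
    rcases h2 (Algebra.trace (ZMod 2) F d) with h3 | h3 <;>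
      simp [h1, h3, h11]

lemma chi_sum (c : F) :
    ∑ b : F, chi F (b * c) = if c = 0 then (Fintype.card F : ℤ) else 0 := by
  letI := ZMod.algebra F 2
  split_ifs with hc
  · subst hc
    simp [chi]
  · have h1 : ∑ b : F, chi F (b * c) = ∑ b : F, chi F b :=
      Fintype.sum_equiv (Equiv.mulRight₀ c hc) _ _ (fun x => rfl)
    rw [h1]
    obtain ⟨b₀, hb₀⟩ : ∃ b : F, Algebra.trace (ZMod 2) F b ≠ 0 := by
      by_contra h
      push_neg at h
      exact Algebra.trace_ne_zero (ZMod 2) F (by ext b; simp [h b])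
    have key : (univ.filter fun b : F => Algebra.trace (ZMod 2) F b = 0).card
        = (univ.filter fun b : F => ¬ Algebra.trace (ZMod 2) F b = 0).card := by
      apply Finset.card_bij (fun x _ => x + b₀)
      · intro a ha
        simp only [mem_filter, mem_univ, true_and] at ha ⊢
        rw [map_add, ha, zero_add]; exact hb₀
      · intro a ha b hb hab
        exact add_right_cancel hab
      · intro b hb
        simp only [mem_filter, mem_univ, true_and] at hb
        refine ⟨b + b₀, ?_, ?_⟩
        · simp only [mem_filter, mem_univ, true_and]
          rw [map_add]
          have h2 : ∀ z : ZMod 2, z ≠ 0 → z = 1 := by decide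
          rw [h2 _ hb, h2 _ hb₀]
          decide
        · rw [add_assoc, CharTwo.add_self_eq_zero, add_zero]
    calc ∑ b : F, chi F b
        = ∑ b : F, (if Algebra.trace (ZMod 2) F b = 0 then (1:ℤ) else -1) := rfl
      _ = 0 := by
          rw [Finset.sum_ite, Finset.sum_const, Finset.sum_const, key]
          simp

lemma charTwo_add_eq_zero_iff (a b : F) : a + b = 0 ↔ a = b := by
  constructor
  · intro h
    have h' := congrArg (· + b) h
    simpa [add_assoc, CharTwo.add_self_eq_zero] using h'
  · rintro rfl
    exact CharTwo.add_self_eq_zero a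

lemma walsh_eq (f : F → F) (b : F) : Walsh f b 0 = ∑ x : F, chi F (b * f x) := by
  letI := ZMod.algebra F 2
  have : Walsh f b 0 = ∑ x : F, chi F (b * f x + 0 * x) := rfl
  simpa using this

end aux

/-- for an almost bent map `f` on `F_{2^n}` with
`k = max_a ω(a)`, one has `|Image f| ≤ 2^n − ((k−1)/k)·2^{(n+1)/2}`; in particular, if
`f` is not a permutation, then `|Image f| ≤ 2^n − 2^{(n−1)/2}`. -/
theorem almost_bent_image_upper_bound {F : Type*} [Field F] [Fintype F] [CharP F 2]
    {n : ℕ} (hn : Odd n) (hcard : Fintype.card F = 2 ^ n) {f : F → F}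
    (hab : ∀ b a : F, b ≠ 0 →
      Walsh f b a = 0 ∨ Walsh f b a = 2 ^ ((n + 1) / 2) ∨
        Walsh f b a = -(2 ^ ((n + 1) / 2)))
    {k : ℕ} (hub : ∀ a : F, preCard f a ≤ k) (hex : ∃ a : F, preCard f a = k) :
    ((Finset.image f Finset.univ).card : ℚ)
        ≤ 2 ^ n - (((k : ℚ) - 1) / k) * 2 ^ ((n + 1) / 2) ∧
    (¬ Function.Injective f →
      ((Finset.image f Finset.univ).card : ℚ) ≤ 2 ^ n - 2 ^ ((n - 1) / 2)) := by
  classical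
  set q : ℕ := Fintype.card F with hqdef
  set s : ℤ := 2 ^ ((n + 1) / 2) with hsdef
  obtain ⟨t, ht⟩ := hn
  have hqZ : (q : ℤ) = 2 ^ n := by exact_mod_cast hcard
  have hs2 : s ^ 2 = (q : ℤ) * 2 := by
    rw [hsdef, sq, ← pow_add, hqZ, ← pow_succ]
    congr 1
    omega
  have hspos : (0 : ℤ) < s := by positivity
  have hqpos : (0 : ℤ) < (q : ℤ) := by rw [hqZ]; positivity
  -- Fact 1
  have fact1 : ∀ a₀ : F, ∑ b : F, Walsh f b 0 * chi F (b * a₀)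
      = (q : ℤ) * (preCard f a₀ : ℤ) := by
    intro a₀
    have hW : ∀ b : F, Walsh f b 0 * chi F (b * a₀)
        = ∑ x : F, chi F (b * (f x + a₀)) := by
      intro b
      rw [walsh_eq, Finset.sum_mul]
      exact Finset.sum_congr rfl fun x _ => by rw [← chi_add, mul_add]
    calc ∑ b : F, Walsh f b 0 * chi F (b * a₀)
        = ∑ b : F, ∑ x : F, chi F (b * (f x + a₀)) :=
          Finset.sum_congr rfl fun b _ => hW b
      _ = ∑ x : F, ∑ b : F, chi F (b * (f x + a₀)) := Finset.sum_comm
      _ = ∑ x : F, (if f x + a₀ = 0 then ((q : ℤ)) else 0) :=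
          Finset.sum_congr rfl fun x _ => chi_sum _
      _ = ∑ x : F, (if f x = a₀ then ((q : ℤ)) else 0) := by
          refine Finset.sum_congr rfl fun x _ => ?_
          simp [charTwo_add_eq_zero_iff]
      _ = (q : ℤ) * (preCard f a₀ : ℤ) := by
          rw [Finset.sum_ite, Finset.sum_const, Finset.sum_const, preCard]
          simp [mul_comm]
  -- Fact 2
  have fact2 : ∑ b : F, (Walsh f b 0) ^ 2 = (q : ℤ) * (NN f : ℤ) := by
    have hW : ∀ b : F, (Walsh f b 0) ^ 2
        = ∑ p : F × F, chi F (b * (f p.1 + f p.2)) := by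
      intro b
      rw [walsh_eq, sq, Finset.sum_mul_sum, Fintype.sum_prod_type]
      refine Finset.sum_congr rfl fun x _ => Finset.sum_congr rfl fun y _ => ?_
      show chi F (b * f x) * chi F (b * f y) = chi F (b * (f x + f y))
      rw [← chi_add, mul_add]
    calc ∑ b : F, (Walsh f b 0) ^ 2
        = ∑ b : F, ∑ p : F × F, chi F (b * (f p.1 + f p.2)) :=
          Finset.sum_congr rfl fun b _ => hW b
      _ = ∑ p : F × F, ∑ b : F, chi F (b * (f p.1 + f p.2)) := Finset.sum_comm
      _ = ∑ p : F × F, (if f p.1 + f p.2 = 0 then ((q : ℤ)) else 0) :=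
          Finset.sum_congr rfl fun p _ => chi_sum _
      _ = ∑ p : F × F, (if f p.1 = f p.2 then ((q : ℤ)) else 0) := by
          refine Finset.sum_congr rfl fun p _ => ?_
          simp [charTwo_add_eq_zero_iff]
      _ = (q : ℤ) * (NN f : ℤ) := by
          rw [Finset.sum_ite, Finset.sum_const, Finset.sum_const, NN]
          simp [mul_comm]
  have hW00 : Walsh f 0 0 = (q : ℤ) := by
    rw [walsh_eq]
    simp [chi_zero]
    exact hqdef.symm
  set T : Finset F := univ.filter (fun b : F => b ≠ 0 ∧ Walsh f b 0 ≠ 0) with hTdef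
  set m : ℕ := T.card with hmdef
  have hsum_split : ∀ g : F → ℤ, ∑ b : F, g b = g 0 + ∑ b ∈ univ.erase 0, g b :=
    fun g => (Finset.add_sum_erase univ g (mem_univ 0)).symm
  have herase : ∀ g : F → ℤ, (∀ b : F, b ≠ 0 → Walsh f b 0 = 0 → g b = 0) →
      ∑ b ∈ univ.erase 0, g b = ∑ b ∈ T, g b := by
    intro g hg
    refine (Finset.sum_subset ?_ ?_).symm
    · intro b hb
      simp only [hTdef, mem_filter, mem_univ, true_and] at hb
      simp [hb.1]
    · intro b hb hbT
      simp only [mem_erase, mem_univ, and_true] at hb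
      simp only [hTdef, mem_filter, mem_univ, true_and, not_and, not_not] at hbT
      exact hg b hb (hbT hb)
  -- Claim A
  have hA : (q : ℤ) * (NN f : ℤ) = (q : ℤ) ^ 2 + (m : ℤ) * s ^ 2 := by
    rw [← fact2, hsum_split (fun b => (Walsh f b 0) ^ 2), hW00,
      herase _ (fun b _ h => by rw [h]; ring)]
    have : ∑ b ∈ T, (Walsh f b 0) ^ 2 = ∑ b ∈ T, s ^ 2 := by
      refine Finset.sum_congr rfl fun b hb => ?_
      simp only [hTdef, mem_filter, mem_univ, true_and] at hb
      rcases hab b 0 hb.1 with h | h | h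
      · exact absurd h hb.2
      · rw [h]
      · rw [h]; ring
    rw [this, Finset.sum_const, hmdef]
    push_cast
    ring
  -- Claim B
  have hB : (q : ℤ) * (k : ℤ) ≤ (q : ℤ) + (m : ℤ) * s := by
    obtain ⟨a₀, ha₀⟩ := hex
    have h1 := fact1 a₀
    rw [ha₀] at h1
    rw [hsum_split (fun b => Walsh f b 0 * chi F (b * a₀)),
      herase _ (fun b _ h => by rw [h]; ring)] at h1
    have h0 : Walsh f 0 0 * chi F (0 * a₀) = (q : ℤ) := by
      rw [hW00, zero_mul, chi_zero, mul_one]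
    rw [h0] at h1
    have hbound : ∑ b ∈ T, Walsh f b 0 * chi F (b * a₀) ≤ (m : ℤ) * s := by
      have := Finset.sum_le_card_nsmul T (fun b => Walsh f b 0 * chi F (b * a₀)) s
        (fun b hb => by
          show Walsh f b 0 * chi F (b * a₀) ≤ s
          simp only [hTdef, mem_filter, mem_univ, true_and] at hb
          rcases hab b 0 hb.1 with h | h | h <;>
            rcases chi_abs (b * a₀) with h' | h' <;> rw [h, h'] <;> linarith)
      simpa [nsmul_eq_mul, hmdef] using this
    linarith
  -- NN value
  have hNNval : (NN f : ℤ) = (q : ℤ) + 2 * m := by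
    have := hA
    rw [hs2] at this
    have h2 : (q : ℤ) * (NN f : ℤ) = (q : ℤ) * ((q : ℤ) + 2 * m) := by
      rw [this]; ring
    exact mul_left_cancel₀ (ne_of_gt hqpos) h2
  -- fiberwise sums
  set I : ℕ := (Finset.image f Finset.univ).card with hIdef
  have hqsum : ∑ y ∈ Finset.image f Finset.univ, (preCard f y : ℤ) = (q : ℤ) := by
    have := Finset.card_eq_sum_card_image f (univ : Finset F)
    rw [Finset.card_univ] at this
    rw [← hqdef] at this
    simp only [preCard]
    exact_mod_cast this.symm
  have hNNsum : (NN f : ℤ)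
      = ∑ y ∈ Finset.image f Finset.univ, (preCard f y : ℤ) ^ 2 := by
    have hcount := Finset.card_eq_sum_card_fiberwise
      (f := fun p : F × F => f p.1) (s := univ.filter fun p : F × F => f p.1 = f p.2)
      (t := Finset.image f Finset.univ)
      (fun p hp => Finset.mem_image_of_mem f (mem_univ p.1))
    have hfiber : ∀ y ∈ Finset.image f Finset.univ,
        ((univ.filter fun p : F × F => f p.1 = f p.2).filter
          fun p => f p.1 = y).card = (preCard f y) ^ 2 := by
      intro y hy
      have hset : ((univ.filter fun p : F × F => f p.1 = f p.2).filter
          fun p => f p.1 = y)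
          = (univ.filter fun x : F => f x = y) ×ˢ (univ.filter fun x : F => f x = y) := by
        ext ⟨x, z⟩
        simp only [mem_filter, mem_univ, true_and, Finset.mem_product]
        constructor
        · rintro ⟨h1, h2⟩; exact ⟨h2, h2 ▸ h1.symm⟩
        · rintro ⟨h1, h2⟩; exact ⟨h1.trans h2.symm, h1⟩
      rw [hset, Finset.card_product, preCard, sq]
    rw [NN, hcount]
    push_cast
    exact Finset.sum_congr rfl fun y hy => by rw [hfiber y hy]; push_cast; ring
  have hkpos : 1 ≤ k := by
    have hq1 : 0 < q := by rw [hcard]; positivity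
    obtain ⟨x⟩ : Nonempty F := Fintype.card_pos_iff.mp hq1
    have h1 : 1 ≤ preCard f (f x) :=
      Finset.card_pos.mpr ⟨x, by simp [preCard]⟩
    exact le_trans h1 (hub (f x))
  have hptwise : ∀ y ∈ Finset.image f Finset.univ,
      (preCard f y : ℤ) ^ 2 + k ≤ ((k : ℤ) + 1) * preCard f y := by
    intro y hy
    obtain ⟨x, _, hx⟩ := Finset.mem_image.mp hy
    have h1 : 1 ≤ preCard f y := Finset.card_pos.mpr ⟨x, by simp [preCard, hx]⟩
    have h2 : preCard f y ≤ k := hub y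
    have h1' : (1 : ℤ) ≤ (preCard f y : ℤ) := by exact_mod_cast h1
    have h2' : (preCard f y : ℤ) ≤ (k : ℤ) := by exact_mod_cast h2
    nlinarith
  -- Claim C
  have hC : (q : ℤ) + 2 * m + (I : ℤ) * k ≤ ((k : ℤ) + 1) * q := by
    have hsum := Finset.sum_le_sum hptwise
    rw [Finset.sum_add_distrib, Finset.sum_const, ← Finset.mul_sum, hqsum,
      ← hNNsum] at hsum
    rw [← hIdef] at hsum
    have : (NN f : ℤ) + (I : ℤ) * k ≤ ((k : ℤ) + 1) * q := by
      simpa [nsmul_eq_mul, mul_comm] using hsum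
    linarith [hNNval, this]
  -- move to ℚ
  have hqQ : ((q : ℚ)) = 2 ^ n := by exact_mod_cast hcard
  have hqQpos : (0 : ℚ) < q := by rw [hqQ]; positivity
  have hs2Q : ((2 : ℚ) ^ ((n + 1) / 2)) ^ 2 = (q : ℚ) * 2 := by
    exact_mod_cast (show ((2 : ℤ) ^ ((n + 1) / 2)) ^ 2 = (q : ℤ) * 2 by
      rw [← hsdef]; exact hs2)
  have hBQ : (q : ℚ) * k ≤ (q : ℚ) + (m : ℚ) * 2 ^ ((n + 1) / 2) := by
    exact_mod_cast (show (q : ℤ) * k ≤ (q : ℤ) + (m : ℤ) * 2 ^ ((n + 1) / 2) by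
      rw [← hsdef]; exact hB)
  set sQ : ℚ := 2 ^ ((n + 1) / 2) with hsQdef
  have hsQpos : (0 : ℚ) < sQ := by rw [hsQdef]; positivity
  have hCQ : (q : ℚ) + 2 * m + (I : ℚ) * k ≤ ((k : ℚ) + 1) * q := by exact_mod_cast hC
  have hkQ : (1 : ℚ) ≤ k := by exact_mod_cast hkpos
  have hkQpos : (0 : ℚ) < k := by linarith
  have key : ((k : ℚ) - 1) * sQ ≤ 2 * m := by
    have h0 := mul_le_mul_of_nonneg_right hBQ hsQpos.le
    have h1 : ((k : ℚ) - 1) * sQ * q ≤ 2 * m * q := by nlinarith [h0, hs2Q]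
    exact le_of_mul_le_mul_right h1 hqQpos
  have part1 : (I : ℚ) ≤ 2 ^ n - (((k : ℚ) - 1) / k) * sQ := by
    rw [← mul_le_mul_iff_of_pos_right hkQpos, sub_mul]
    have hdiv : ((k : ℚ) - 1) / k * sQ * k = ((k : ℚ) - 1) * sQ := by field_simp
    rw [hdiv]
    nlinarith [hCQ, key, hqQ]
  refine ⟨part1, ?_⟩
  intro hni
  obtain ⟨x, y, hfxy, hxy⟩ := Function.not_injective_iff.mp hni
  have hk2 : 2 ≤ k := by
    have h2 : 1 < preCard f (f x) := by
      rw [preCard]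
      exact Finset.one_lt_card.mpr
        ⟨x, by simp, y, by simp [hfxy.symm], hxy⟩
    exact le_trans h2 (hub (f x))
  have hk2Q : (2 : ℚ) ≤ k := by exact_mod_cast hk2
  have hhalf : (1 / 2 : ℚ) ≤ ((k : ℚ) - 1) / k := by
    rw [div_le_div_iff₀ (by norm_num) hkQpos]
    linarith
  have hexp : (2 : ℚ) ^ ((n - 1) / 2) = sQ / 2 := by
    have e1 : (n + 1) / 2 = (n - 1) / 2 + 1 := by omega
    rw [hsQdef, e1, pow_succ]
    ring
  have hmul := mul_le_mul_of_nonneg_right hhalf hsQpos.le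
  rw [hexp]
  linarith [part1, hmul]
end
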